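/- arXiv:2309.07527 — 8 statements merged into one kernel-verified Lean document; each statement's English description precedes it below -/
import Mathlib

section
/- For every sufficiently large n ∈ ℕ and every convex set A ⊂ ℝ with |A| = n, there exists a matching M ⊂ A × A with |M| ≥ √n such that the restricted difference set A -_M A = {a - b : (a,b) ∈ M} is convex. -/
/-!
Let `a₀ < ⋯ < a_{n-1}` be the elements of `A`, with `t = ⌊√n⌋ + 1`. Match `a_{c_k}` with
`a_{t-1-k}` for `k < t`, where `c₀ = t` and `c_{k+1} = c_k + (k + 2)`; since `c_{t-1} ≈ t²/2`,
this fits inside `A` once `n ≥ 36`. The differences `D_k = a_{c_k} - a_{t-1-k}` increase, and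
`D_{k+2} - D_{k+1}` exceeds `D_{k+1} - D_k` because the window `[c_{k+1}, c_{k+2}]` is one step
longer than, and lies to the right of, the window `[c_k, c_{k+1}]`: the extra gap of `A` it
contains is larger than any gap among `a₀, …, a_{t-1}`, which dominates the (concave)
contribution of the second coordinates.
-/

/-- A finite set `S = {s_1 < ... < s_m} ⊂ ℝ` is convex if its consecutive differences
are strictly increasing. -/
def ConvexFinset (S : Finset ℝ) : Prop :=
  ∀ i : ℕ, ∀ h : i + 2 < S.card,
    (S.orderIsoOfFin rfl ⟨i + 2, h⟩ : ℝ) - (S.orderIsoOfFin rfl ⟨i + 1, by omega⟩ : ℝ) >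
    (S.orderIsoOfFin rfl ⟨i + 1, by omega⟩ : ℝ) - (S.orderIsoOfFin rfl ⟨i, by omega⟩ : ℝ)

/-- `M ⊆ A × A` is a matching if each element of `A` occurs in at most one coordinate of
at most one pair of `M` (in particular the pairs are pairwise disjoint). -/
def IsMatching (A : Finset ℝ) (M : Finset (ℝ × ℝ)) : Prop :=
  (∀ p ∈ M, p.1 ∈ A ∧ p.2 ∈ A ∧ p.1 ≠ p.2) ∧
  (∀ p ∈ M, ∀ q ∈ M, p ≠ q → p.1 ≠ q.1 ∧ p.1 ≠ q.2 ∧ p.2 ≠ q.1 ∧ p.2 ≠ q.2)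

open Finset

namespace Finset

variable {α : Type*} [LinearOrder α]

theorem card_image_range_of_strictMonoOn {f : ℕ → α} {m : ℕ}
    (hf : StrictMonoOn f (Set.Iio m)) : #((range m).image f) = m := by
  rw [card_image_of_injOn (by simpa using hf.injOn), card_range]

variable [Inhabited α] (A : Finset α)

noncomputable def enum (i : ℕ) : α :=
  if h : i < #A then A.orderEmbOfFin rfl ⟨i, h⟩ else default

variable {A}

theorem enum_of_lt {i : ℕ} (h : i < #A) : A.enum i = A.orderEmbOfFin rfl ⟨i, h⟩ :=
  dif_pos h

theorem enum_mem {i : ℕ} (h : i < #A) : A.enum i ∈ A := by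
  rw [enum_of_lt h]
  exact orderEmbOfFin_mem A rfl _

theorem enum_strictMonoOn : StrictMonoOn A.enum (Set.Iio #A) := by
  intro i hi j hj hij
  rw [enum_of_lt hi, enum_of_lt hj]
  exact (A.orderEmbOfFin rfl).strictMono hij

theorem enum_image_range {f : ℕ → α} {m : ℕ} (hf : StrictMonoOn f (Set.Iio m)) {i : ℕ}
    (hi : i < m) : ((range m).image f).enum i = f i := by
  have hcard := card_image_range_of_strictMonoOn hf
  have hunique : (fun j : Fin m => f j) = ((range m).image f).orderEmbOfFin hcard :=
    orderEmbOfFin_unique hcard (fun j => mem_image_of_mem f (mem_range.2 j.2))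
      (fun j k hjk => hf (Set.mem_Iio.2 j.2) (Set.mem_Iio.2 k.2) hjk)
  rw [enum_of_lt (by rwa [hcard])]
  exact (congrFun hunique ⟨i, hi⟩).symm

end Finset

def IncreasingGaps (f : ℕ → ℝ) (m : ℕ) : Prop :=
  ∀ i, i + 2 < m → f (i + 1) - f i < f (i + 2) - f (i + 1)

theorem convexFinset_iff_increasingGaps (A : Finset ℝ) :
    ConvexFinset A ↔ IncreasingGaps A.enum #A := by
  refine forall₂_congr fun i h => ?_
  rw [enum_of_lt h, enum_of_lt (by omega : i + 1 < #A), enum_of_lt (by omega : i < #A)]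
  rfl

theorem convexFinset_image_range_iff {f : ℕ → ℝ} {m : ℕ} (hf : StrictMonoOn f (Set.Iio m)) :
    ConvexFinset ((range m).image f) ↔ IncreasingGaps f m := by
  rw [convexFinset_iff_increasingGaps, card_image_range_of_strictMonoOn hf]
  refine forall₂_congr fun i h => ?_
  rw [enum_image_range hf h, enum_image_range hf (by omega), enum_image_range hf (by omega)]

namespace IncreasingGaps

variable {a : ℕ → ℝ} {m : ℕ}

theorem gap_lt (h : IncreasingGaps a m) {i j : ℕ} (hij : i < j) (hj : j + 1 < m) :
    a (i + 1) - a i < a (j + 1) - a j :=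
  strictMonoOn_Iic_of_lt_succ (n := m - 2) (ψ := fun i => a (i + 1) - a i)
    (fun k hk => by simpa [add_assoc] using h k (by omega))
    (Set.mem_Iic.2 (by omega)) (Set.mem_Iic.2 (by omega)) hij

theorem sub_shift_lt (h : IncreasingGaps a m) {i j k : ℕ} (hk : 0 < k) (hij : i < j)
    (hj : j + k < m) : a (i + k) - a i < a (j + k) - a j :=
  strictMonoOn_Iic_of_lt_succ (n := m - 1 - k) (ψ := fun i => a (i + k) - a i)
    (fun l hl => by
      have := h.gap_lt (i := l) (j := l + k) (by omega) (by omega)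
      simp only [Order.succ_eq_add_one, add_right_comm l 1 k]
      linarith)
    (Set.mem_Iic.2 (by omega)) (Set.mem_Iic.2 (by omega)) hij

end IncreasingGaps

def upperIndex (t : ℕ) : ℕ → ℕ
  | 0 => t
  | k + 1 => upperIndex t k + (k + 2)

theorem upperIndex_strictMono (t : ℕ) : StrictMono (upperIndex t) :=
  strictMono_nat_of_lt_succ fun k => by simp [upperIndex]

theorem le_upperIndex (t k : ℕ) : t ≤ upperIndex t k :=
  (upperIndex_strictMono t).monotone (Nat.zero_le k)

theorem upperIndex_lt {t k m : ℕ} (hm : upperIndex t (t - 1) < m) (hk : k < t) :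
    upperIndex t k < m :=
  ((upperIndex_strictMono t).monotone (by omega)).trans_lt hm

theorem two_mul_upperIndex (t k : ℕ) : 2 * upperIndex t k = 2 * t + k * k + 3 * k := by
  induction k with
  | zero => rfl
  | succ k ih => simp only [upperIndex]; ring_nf; ring_nf at ih; omega

theorem upperIndex_sqrt_lt {n : ℕ} (hn : 36 ≤ n) :
    upperIndex (Nat.sqrt n + 1) (Nat.sqrt n) < n := by
  have h6 : 6 ≤ Nat.sqrt n := Nat.le_sqrt.2 hn
  have hsq : Nat.sqrt n * Nat.sqrt n ≤ n := Nat.sqrt_le n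
  have := two_mul_upperIndex (Nat.sqrt n + 1) (Nat.sqrt n)
  nlinarith

def matchedDiff (a : ℕ → ℝ) (t k : ℕ) : ℝ :=
  a (upperIndex t k) - a (t - 1 - k)

variable {a : ℕ → ℝ} {m t : ℕ}

theorem matchedDiff_strictMonoOn (ha : StrictMonoOn a (Set.Iio m))
    (hm : upperIndex t (t - 1) < m) : StrictMonoOn (matchedDiff a t) (Set.Iio t) := by
  intro k hk l hl hkl
  simp only [Set.mem_Iio] at hk hl
  have htm : t < m := (le_upperIndex t (t - 1)).trans_lt hm
  have hupper : a (upperIndex t k) < a (upperIndex t l) :=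
    ha (upperIndex_lt hm hk) (upperIndex_lt hm hl) (upperIndex_strictMono t hkl)
  have hlower : a (t - 1 - l) < a (t - 1 - k) := ha (by simp; omega) (by simp; omega) (by omega)
  unfold matchedDiff
  linarith

theorem IncreasingGaps.matchedDiff (hg : IncreasingGaps a m) (ha : MonotoneOn a (Set.Iio m))
    (hm : upperIndex t (t - 1) < m) : IncreasingGaps (matchedDiff a t) t := by
  intro k hk
  have htm : t < m := (le_upperIndex t (t - 1)).trans_lt hm
  have ht : t ≤ upperIndex t (k + 1) := le_upperIndex t (k + 1)
  have hx2m : upperIndex t (k + 2) < m := upperIndex_lt hm hk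
  have hx1 : upperIndex t (k + 1) = upperIndex t k + (k + 2) := rfl
  have hx2 : upperIndex t (k + 2) = upperIndex t (k + 1) + 1 + (k + 2) := by
    simp only [upperIndex]; ring
  have hshift : a (upperIndex t (k + 1)) - a (upperIndex t k) <
      a (upperIndex t (k + 2)) - a (upperIndex t (k + 1) + 1) := by
    rw [hx1, hx2]
    exact hg.sub_shift_lt (by omega) (by omega) (by omega)
  have hgap : a (t - 1 - k) - a (t - 1 - (k + 1)) <
      a (upperIndex t (k + 1) + 1) - a (upperIndex t (k + 1)) := by
    have := hg.gap_lt (i := t - 1 - (k + 1)) (j := upperIndex t (k + 1)) (by omega) (by omega)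
    rwa [show t - 1 - (k + 1) + 1 = t - 1 - k by omega] at this
  have hmono : a (t - 1 - (k + 2)) ≤ a (t - 1 - (k + 1)) :=
    ha (by simp; omega) (by simp; omega) (by omega)
  unfold _root_.matchedDiff
  linarith

section Matching

variable {A : Finset ℝ} {x y : ℕ → ℕ}

theorem isMatching_image_range (haA : Set.MapsTo a (Set.Iio m) A)
    (ha : Set.InjOn a (Set.Iio m)) (hx : Set.MapsTo x (Set.Iio t) (Set.Iio m))
    (hy : Set.MapsTo y (Set.Iio t) (Set.Iio m)) (hxinj : Set.InjOn x (Set.Iio t))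
    (hyinj : Set.InjOn y (Set.Iio t)) (hxy : ∀ k < t, ∀ l < t, x k ≠ y l) :
    IsMatching A ((range t).image fun k => (a (x k), a (y k))) := by
  simp only [IsMatching, mem_image, mem_range, forall_exists_index, and_imp]
  refine ⟨?_, ?_⟩
  · rintro _ k hk rfl
    exact ⟨haA (hx hk), haA (hy hk), (ha.ne (hx hk) (hy hk) (hxy k hk k hk))⟩
  · rintro _ k hk rfl _ l hl rfl hkl
    have hkl : k ≠ l := by rintro rfl; exact hkl rfl
    exact ⟨ha.ne (hx hk) (hx hl) (hxinj.ne hk hl hkl), ha.ne (hx hk) (hy hl) (hxy k hk l hl),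
      ha.ne (hy hk) (hx hl) (hxy l hl k hk).symm, ha.ne (hy hk) (hy hl) (hyinj.ne hk hl hkl)⟩

theorem card_image_range_pair (ha : Set.InjOn a (Set.Iio m))
    (hx : Set.MapsTo x (Set.Iio t) (Set.Iio m)) (hxinj : Set.InjOn x (Set.Iio t)) :
    #((range t).image fun k => (a (x k), a (y k))) = t := by
  rw [card_image_of_injOn, card_range]
  intro k hk l hl hkl
  rw [coe_range] at hk hl
  exact hxinj hk hl (ha (hx hk) (hx hl) (congrArg Prod.fst hkl))

end Matching

/-- for every sufficiently large `n` and every convex `A ⊂ ℝ` with `|A| = n`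
there is a matching `M ⊆ A × A` with `|M| ≥ √n` such that `A -_M A` is convex. -/
theorem statement4 :
    ∃ N : ℕ, ∀ n : ℕ, N ≤ n → ∀ A : Finset ℝ, A.card = n → ConvexFinset A →
      ∃ M : Finset (ℝ × ℝ), IsMatching A M ∧ Real.sqrt n ≤ (M.card : ℝ) ∧
        ConvexFinset (M.image (fun p => p.1 - p.2)) := by
  refine ⟨36, fun n hn A hA hconv => ?_⟩
  subst hA
  set t := Nat.sqrt #A + 1
  have hm : upperIndex t (t - 1) < #A := upperIndex_sqrt_lt hn
  have htA : t < #A := (le_upperIndex t (t - 1)).trans_lt hm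
  have hx : Set.MapsTo (upperIndex t) (Set.Iio t) (Set.Iio #A) := fun k hk => upperIndex_lt hm hk
  have hy : Set.MapsTo (t - 1 - ·) (Set.Iio t) (Set.Iio #A) := fun k _ => by simp; omega
  have hxinj : Set.InjOn (upperIndex t) (Set.Iio t) := (upperIndex_strictMono t).injective.injOn
  have hyinj : Set.InjOn (t - 1 - ·) (Set.Iio t) := fun k hk l hl h => by simp at hk hl h; omega
  have hxy : ∀ k < t, ∀ l < t, upperIndex t k ≠ t - 1 - l :=
    fun k _ l _ => by have := le_upperIndex t k; omega
  refine ⟨_, isMatching_image_range (fun i hi => enum_mem hi) enum_strictMonoOn.injOn hx hy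
    hxinj hyinj hxy, ?_, ?_⟩
  · rw [card_image_range_pair enum_strictMonoOn.injOn hx hxinj]
    exact_mod_cast Real.real_sqrt_le_nat_sqrt_succ
  · rw [image_image]
    exact (convexFinset_image_range_iff (matchedDiff_strictMonoOn enum_strictMonoOn hm)).2
      (((convexFinset_iff_increasingGaps A).1 hconv).matchedDiff enum_strictMonoOn.monotoneOn hm)
end

section
/- Let A = {a_1 < ... < a_n} be a convex set, let k = ⌈√n⌉, and suppose k + 1 + k(k+1)/2 ≤ n. Define M = {(a_{k+1-i}, a_{k+1+i(i+1)/2}) : 1 ≤ i ≤ k}. Then M is a matching on A of size k and the set {a_{k+1+i(i+1)/2} - a_{k+1-i} : 1 ≤ i ≤ k} is convex. -/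
lemma strictMonoOn_Icc_of_lt_add_one {β : Type*} [Preorder β] {f : ℕ → β} {l r : ℕ}
    (hf : ∀ i, l ≤ i → i + 1 ≤ r → f i < f (i + 1)) : StrictMonoOn f (Set.Icc l r) :=
  strictMonoOn_of_lt_succ Set.ordConnected_Icc fun i _ hi hi' => by
    simp only [Order.succ_eq_add_one, Set.mem_Icc] at hi hi' ⊢
    exact hf i hi.1 hi'.2

lemma sub_lt_sub_of_strictMonoOn_gaps {g : ℕ → ℝ} {l r : ℕ}
    (hg : StrictMonoOn (fun i => g (i + 1) - g i) (Set.Ico l r)) {p q m : ℕ}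
    (hlp : l ≤ p) (hpq : p < q) (hm : 0 < m) (hqr : q + m ≤ r) :
    g (p + m) - g p < g (q + m) - g q := by
  have telescope (s : ℕ) : g (s + m) - g s = ∑ j ∈ Finset.range m, (g (s + j + 1) - g (s + j)) :=
    (Finset.sum_range_sub (fun j => g (s + j)) m).symm
  rw [telescope p, telescope q]
  refine Finset.sum_lt_sum_of_nonempty (Finset.nonempty_range_iff.2 hm.ne') fun j hj => ?_
  rw [Finset.mem_range] at hj
  exact hg ⟨by omega, by omega⟩ ⟨by omega, by omega⟩ (by omega)

lemma triangle_succ (i : ℕ) : (i + 1) * (i + 1 + 1) / 2 = i * (i + 1) / 2 + (i + 1) := by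
  rw [show (i + 1) * (i + 1 + 1) = i * (i + 1) + (i + 1) * 2 by ring,
    Nat.add_mul_div_right _ _ two_pos]

lemma strictMono_triangle : StrictMono fun i : ℕ => i * (i + 1) / 2 :=
  strictMono_nat_of_lt_succ fun i => by rw [triangle_succ]; omega

lemma isMatching_image_pair {ι : Type*} (a : ι → ℝ) (S I : Finset ι)
    (f g : ι → ι) (ha : Set.InjOn a S) (hfS : ∀ i ∈ I, f i ∈ S) (hgS : ∀ i ∈ I, g i ∈ S)
    (hf : Set.InjOn f I) (hg : Set.InjOn g I) (hfg : ∀ i ∈ I, ∀ j ∈ I, f i ≠ g j) :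
    IsMatching (S.image a) (I.image fun i => (a (f i), a (g i))) := by
  refine ⟨?_, ?_⟩
  · simp only [Finset.mem_image]
    rintro _ ⟨i, hi, rfl⟩
    exact ⟨⟨f i, hfS i hi, rfl⟩, ⟨g i, hgS i hi, rfl⟩, ha.ne (hfS i hi) (hgS i hi) (hfg i hi i hi)⟩
  · simp only [Finset.mem_image]
    rintro _ ⟨i, hi, rfl⟩ _ ⟨j, hj, rfl⟩ hpq
    have hij : i ≠ j := by rintro rfl; exact hpq rfl
    exact ⟨ha.ne (hfS i hi) (hfS j hj) fun h => hij (hf hi hj h),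
      ha.ne (hfS i hi) (hgS j hj) (hfg i hi j hj), ha.ne (hgS i hi) (hfS j hj) (hfg j hj i hi).symm,
      ha.ne (hgS i hi) (hgS j hj) fun h => hij (hg hi hj h)⟩

lemma card_image_pair {ι : Type*} (a : ι → ℝ) (S I : Finset ι) (f g : ι → ι)
    (ha : Set.InjOn a S) (hfS : ∀ i ∈ I, f i ∈ S) (hf : Set.InjOn f I) :
    (I.image fun i => (a (f i), a (g i))).card = I.card :=
  Finset.card_image_of_injOn fun i hi j hj h =>
    hf hi hj (ha (hfS i hi) (hfS j hj) (congrArg Prod.fst h))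

section ConvexSequence

variable {n : ℕ} {a : ℕ → ℝ}

lemma strictMonoOn_gaps (ha_conv : ∀ i, 2 ≤ i → i + 1 ≤ n → a (i + 1) - a i > a i - a (i - 1)) :
    StrictMonoOn (fun i => a (i + 1) - a i) (Set.Ico 1 n) :=
  strictMonoOn_of_lt_succ Set.ordConnected_Ico fun i _ hi hi' => by
    simp only [Order.succ_eq_add_one, Set.mem_Ico] at hi hi' ⊢
    simpa using ha_conv (i + 1) (by omega) hi'.2

/-- The second difference splits into three positive parts: the block `[hi + m, hi + 2m]` against
`[hi, hi + m]`, the gap at `hi + 2m` against the gap at `lo + 1`, and the gap at `lo`. -/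
lemma second_diff_pos (ha_mono : ∀ i, 1 ≤ i → i + 1 ≤ n → a i < a (i + 1))
    (ha_conv : ∀ i, 2 ≤ i → i + 1 ≤ n → a (i + 1) - a i > a i - a (i - 1))
    {lo hi m : ℕ} (hlo : 1 ≤ lo) (hlohi : lo + 1 < hi) (hm : 0 < m) (hn : hi + 2 * m + 1 ≤ n) :
    a (hi + 2 * m + 1) - a lo - (a (hi + m) - a (lo + 1)) >
      a (hi + m) - a (lo + 1) - (a hi - a (lo + 2)) := by
  have hgaps := strictMonoOn_gaps ha_conv
  have hblock := sub_lt_sub_of_strictMonoOn_gaps hgaps (p := hi) (q := hi + m) (m := m)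
    (by omega) (by omega) hm (by omega)
  have hlast := sub_lt_sub_of_strictMonoOn_gaps hgaps (p := lo + 1) (q := hi + 2 * m) (m := 1)
    (by omega) (by omega) one_pos (by omega)
  have hleft := ha_mono lo hlo (by omega)
  rw [show hi + m + m = hi + 2 * m by ring] at hblock
  linarith

end ConvexSequence

theorem statement6_general (n k : ℕ) (a : ℕ → ℝ)
    (ha_mono : ∀ i, 1 ≤ i → i + 1 ≤ n → a i < a (i + 1))
    (ha_conv : ∀ i, 2 ≤ i → i + 1 ≤ n → a (i + 1) - a i > a i - a (i - 1))
    (hkn : k + 1 + k * (k + 1) / 2 ≤ n)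
    (A : Finset ℝ) (hA : A = (Finset.Icc 1 n).image a)
    (M : Finset (ℝ × ℝ))
    (hM : M = (Finset.Icc 1 k).image (fun i => (a (k + 1 - i), a (k + 1 + i * (i + 1) / 2))))
    (e : ℕ → ℝ) (he : ∀ i, e i = a (k + 1 + i * (i + 1) / 2) - a (k + 1 - i)) :
    IsMatching A M ∧ M.card = k ∧
    (∀ i, 2 ≤ i → i + 1 ≤ k → e (i + 1) - e i > e i - e (i - 1)) := by
  have ha : Set.InjOn a (Finset.Icc 1 n) := by
    simpa using (strictMonoOn_Icc_of_lt_add_one ha_mono).injOn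
  have hT := strictMono_triangle
  have hT_le {i : ℕ} (hi : i ∈ Finset.Icc 1 k) :
      1 ≤ i * (i + 1) / 2 ∧ i * (i + 1) / 2 ≤ k * (k + 1) / 2 := by
    rw [Finset.mem_Icc] at hi
    exact ⟨hT.monotone hi.1, hT.monotone hi.2⟩
  have hfS : ∀ i ∈ Finset.Icc 1 k, k + 1 - i ∈ Finset.Icc 1 n := by
    intro i hi; rw [Finset.mem_Icc] at hi ⊢; omega
  have hgS : ∀ i ∈ Finset.Icc 1 k, k + 1 + i * (i + 1) / 2 ∈ Finset.Icc 1 n := by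
    intro i hi; have := hT_le hi; rw [Finset.mem_Icc] at hi ⊢; omega
  have hf_inj : Set.InjOn (fun i => k + 1 - i) (Finset.Icc 1 k) := by
    intro i hi j hj h; simp only [Finset.coe_Icc, Set.mem_Icc] at hi hj h; omega
  refine ⟨?_, ?_, ?_⟩
  · subst hA hM
    refine isMatching_image_pair a _ _ (fun i => k + 1 - i) (fun i => k + 1 + i * (i + 1) / 2)
      ha hfS hgS hf_inj ?_ ?_
    · intro i _ j _ h; exact hT.injective (by simpa using h)
    · intro i hi j hj; have := hT_le hj; rw [Finset.mem_Icc] at hi; omega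
  · subst hM
    rw [card_image_pair a _ _ (fun i => k + 1 - i) (fun i => k + 1 + i * (i + 1) / 2) ha hfS
      hf_inj, Nat.card_Icc, Nat.add_sub_cancel]
  · intro i hi hik
    obtain ⟨j, rfl⟩ : ∃ j, i = j + 1 := ⟨i - 1, by omega⟩
    have hTj := hT.monotone (show j + 1 + 1 ≤ k by omega)
    simp only [he, triangle_succ, Nat.add_sub_cancel] at hTj ⊢
    have := second_diff_pos ha_mono ha_conv (lo := k + 1 - (j + 1 + 1))
      (hi := k + 1 + j * (j + 1) / 2) (m := j + 1) (by omega) (by omega) (by omega) (by omega)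
    convert this using 4 <;> omega

/-- for a convex set `A = {a_1 < ... < a_n}` (given here as a strictly
increasing, convex sequence `a` on indices `1, ..., n`), with `k = ⌈√n⌉` and
`k + 1 + k(k+1)/2 ≤ n`, the set `M = {(a_{k+1-i}, a_{k+1+i(i+1)/2}) : 1 ≤ i ≤ k}` is a
matching on `A` of size `k`, and the set of differences
`e_i = a_{k+1+i(i+1)/2} - a_{k+1-i}` (`1 ≤ i ≤ k`) is convex. -/
theorem statement6 (n k : ℕ) (a : ℕ → ℝ)
    (ha_mono : ∀ i, 1 ≤ i → i + 1 ≤ n → a i < a (i + 1))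
    (ha_conv : ∀ i, 2 ≤ i → i + 1 ≤ n → a (i + 1) - a i > a i - a (i - 1))
    (hk : k = Nat.ceil (Real.sqrt n))
    (hkn : k + 1 + k * (k + 1) / 2 ≤ n)
    (A : Finset ℝ) (hA : A = (Finset.Icc 1 n).image a)
    (M : Finset (ℝ × ℝ))
    (hM : M = (Finset.Icc 1 k).image (fun i => (a (k + 1 - i), a (k + 1 + i * (i + 1) / 2))))
    (e : ℕ → ℝ) (he : ∀ i, e i = a (k + 1 + i * (i + 1) / 2) - a (k + 1 - i)) :
    IsMatching A M ∧ M.card = k ∧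
    (∀ i, 2 ≤ i → i + 1 ≤ k → e (i + 1) - e i > e i - e (i - 1)) :=
  statement6_general n k a ha_mono ha_conv hkn A hA M hM e he
end

section
/- Let d_1 < d_2 < ... < d_{n-1} be a strictly increasing sequence of positive reals and let k ≥ 1 with k + 1 + k(k+1)/2 ≤ n. Define e_i = d_{k+1-i} + d_{k+2-i} + ... + d_{k+i(i+1)/2} for 1 ≤ i ≤ k. Then (e_{i+1} - e_i) - (e_i - e_{i-1}) > 0 for all 2 ≤ i ≤ k-1, i.e., the sequence e_i is convex. -/
/-!
The window of `e_m` is `(k - m, u_m]` with `u_m = k + m(m+1)/2`; passing from `e_m` to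
`e_{m+1}` adds the term `d_{k-m}` at the bottom and the block `(u_m, u_{m+1}]` of `m + 1`
terms at the top. So the second difference at `i` is
`d_{k-i} - d_{k-i+1} + (block of i + 1 terms) - (block of i terms)`, and since `d` is
increasing, the longer upper block exceeds the lower one by more than `d_{u_i + 1} > d_{k-i+1}`,
while `d_{k-i} > 0`.
-/

open Finset

lemma sum_Ioc_add_lt_sum_Ioc {β : Type*} [AddCommGroup β] [LinearOrder β]
    [IsOrderedCancelAddMonoid β] {d : ℕ → β} {a b c : ℕ} (hab : a < b)
    (hbc : c - b = b - a + 1) (hd : StrictMonoOn d (Set.Icc (a + 1) c)) :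
    ∑ t ∈ Ioc a b, d t + d (b + 1) < ∑ t ∈ Ioc b c, d t := by
  have hbot : ∑ t ∈ Ioc a b, d t < (b - a) • d (b + 1) := by
    simpa using sum_lt_sum_of_nonempty (g := fun _ ↦ d (b + 1)) (nonempty_Ioc.2 hab)
      fun t ht ↦ by
        rw [mem_Ioc] at ht
        exact hd (by rw [Set.mem_Icc]; omega) (by rw [Set.mem_Icc]; omega) (by omega)
  have htop : (c - b) • d (b + 1) ≤ ∑ t ∈ Ioc b c, d t := by
    simpa using card_nsmul_le_sum (Ioc b c) d (d (b + 1))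
      fun t ht ↦ by
        rw [mem_Ioc] at ht
        exact hd.monotoneOn (by rw [Set.mem_Icc]; omega) (by rw [Set.mem_Icc]; omega) (by omega)
  rw [hbc, succ_nsmul] at htop
  calc ∑ t ∈ Ioc a b, d t + d (b + 1) < (b - a) • d (b + 1) + d (b + 1) := by gcongr
    _ ≤ _ := htop

lemma sum_Ioc_sub_sum_Ioc {β : Type*} [AddCommGroup β] (f : ℕ → β) {a b c : ℕ}
    (hab : a < b) (hbc : b ≤ c) :
    ∑ t ∈ Ioc a c, f t - ∑ t ∈ Ioc (a + 1) b, f t = f (a + 1) + ∑ t ∈ Ioc b c, f t := by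
  rw [← sum_Ioc_consecutive f (Nat.le_succ a) (hab.trans_le hbc),
    ← sum_Ioc_consecutive f hab hbc, Nat.Ioc_succ_singleton, sum_singleton]
  abel

lemma triangle_succ_eq (j : ℕ) : (j + 1) * (j + 1 + 1) / 2 = j * (j + 1) / 2 + (j + 1) := by
  have : (j + 1) * (j + 1 + 1) = j * (j + 1) + 2 * (j + 1) := by ring
  omega

theorem statement7_general (n k : ℕ) (d : ℕ → ℝ)
    (hd_pos : ∀ i, 1 ≤ i → i ≤ n - 1 → 0 < d i)
    (hd_mono : ∀ i, 1 ≤ i → i + 1 ≤ n - 1 → d i < d (i + 1))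
    (hkn : k + 1 + k * (k + 1) / 2 ≤ n)
    (e : ℕ → ℝ)
    (he : ∀ i, e i = ∑ t ∈ Finset.Icc (k + 1 - i) (k + i * (i + 1) / 2), d t) :
    ∀ i, 2 ≤ i → i + 1 ≤ k → (e (i + 1) - e i) - (e i - e (i - 1)) > 0 := by
  intro i _ hik
  obtain ⟨j, rfl⟩ : ∃ j, i = j + 1 := ⟨i - 1, by omega⟩
  have hmono : StrictMonoOn d (Set.Icc 1 (n - 1)) :=
    strictMonoOn_of_lt_add_one Set.ordConnected_Icc fun t _ ht ht' ↦
      hd_mono t ht.1 ht'.2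
  set u : ℕ → ℕ := fun m ↦ k + m * (m + 1) / 2 with hu
  have hu_succ : ∀ m, u (m + 1) = u m + (m + 1) := fun m ↦ by
    simp only [hu, triangle_succ_eq]; ring
  have hdiff : ∀ m, m + 1 ≤ k →
      e (m + 1) - e m = d (k - m) + ∑ t ∈ Ioc (u m) (u (m + 1)), d t := by
    intro m hm
    rw [he, he, show k + 1 - (m + 1) = k - (m + 1) + 1 by omega,
      show k + 1 - m = k - m + 1 by omega, Icc_add_one_left_eq_Ioc, Icc_add_one_left_eq_Ioc,
      show k - m = k - (m + 1) + 1 by omega]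
    exact sum_Ioc_sub_sum_Ioc (b := u m) (c := u (m + 1)) d (by simp only [hu]; omega)
      (by rw [hu_succ]; omega)
  have hu_le : u (j + 2) ≤ n - 1 := by
    have : (j + 2) * (j + 2 + 1) ≤ k * (k + 1) := Nat.mul_le_mul (by omega) (by omega)
    have := Nat.div_le_div_right (c := 2) this
    simp only [hu]; omega
  rw [Nat.add_sub_cancel, hdiff _ hik, hdiff _ (by omega)]
  have hblock := sum_Ioc_add_lt_sum_Ioc (d := d) (a := u j) (b := u (j + 1)) (c := u (j + 2))
    (by rw [hu_succ]; omega) (by rw [hu_succ, hu_succ]; omega)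
    (hmono.mono (Set.Icc_subset_Icc (by simp only [hu]; omega) hu_le))
  have hlt : d (k - j) < d (u (j + 1) + 1) :=
    hmono (by rw [Set.mem_Icc]; omega)
      (by rw [hu_succ (j + 1)] at hu_le; rw [Set.mem_Icc]; omega) (by simp only [hu]; omega)
  have hpos : 0 < d (k - (j + 1)) := hd_pos _ (by omega) (by omega)
  linarith

/-- for a strictly increasing sequence of positive reals
`d_1 < ... < d_{n-1}` and `k ≥ 1` with `k + 1 + k(k+1)/2 ≤ n`, the sequence
`e_i = d_{k+1-i} + d_{k+2-i} + ... + d_{k+i(i+1)/2}` (`1 ≤ i ≤ k`) is convex: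
`(e_{i+1} - e_i) - (e_i - e_{i-1}) > 0` for all `2 ≤ i ≤ k - 1`. -/
theorem statement7 (n k : ℕ) (d : ℕ → ℝ)
    (hd_pos : ∀ i, 1 ≤ i → i ≤ n - 1 → 0 < d i)
    (hd_mono : ∀ i, 1 ≤ i → i + 1 ≤ n - 1 → d i < d (i + 1))
    (hk : 1 ≤ k) (hkn : k + 1 + k * (k + 1) / 2 ≤ n)
    (e : ℕ → ℝ)
    (he : ∀ i, e i = ∑ t ∈ Finset.Icc (k + 1 - i) (k + i * (i + 1) / 2), d t) :
    ∀ i, 2 ≤ i → i + 1 ≤ k → (e (i + 1) - e i) - (e i - e (i - 1)) > 0 :=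
  statement7_general n k d hd_pos hd_mono hkn e he
end

section
/- Let a_j = Σ_{t=0}^{j-1} (j-t)(2n)^{n-t} for 1 ≤ j ≤ n, and for 1 ≤ k ≤ n-1 let D_k = {a_{j+k} - a_j : 1 ≤ j ≤ n-k}. If S ⊆ A - A is convex and k_1 < k_2 are such that |S ∩ D_{k_2}| ≥ 2, then S ∩ D_{k_1} = ∅. In particular, there is at most one k with |S ∩ D_k| ≥ 2. -/
/-!
Put `N = (2n)^n`. Each increment `a_{j+1} - a_j = ∑_{t ≤ j} (2n)^(n-t)` is a geometric sum in
`[N, N + N/(2n - 1)]`, so for `1 ≤ u ≤ v ≤ n` the difference `a_v - a_u` lies in the band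
`[kN, kN + N/2)` with `k = v - u ≤ n - 1`. Hence `D_k` lies in band `k` and the other elements of
`A - A` are `≤ 0`. If a convex `S` meets band `k₁` and has two points `y₀ < z` in a higher band
`k₂`, `y₀` the lowest one, then the predecessor `x` of `y₀` in `S` lies in no band `≥ k₂`, so
`z - y₀ < N/2 < y₀ - x`, against convexity.
-/

open Pointwise

open Finset

lemma ConvexFinset.exists_sub_lt_sub {S : Finset ℝ} (hS : ConvexFinset S) {s y z : ℝ}
    (hs : s ∈ S) (hy : y ∈ S) (hz : z ∈ S) (hsy : s < y) (hyz : y < z) :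
    ∃ x ∈ S, x < y ∧ y - x < z - y := by
  set e := S.orderIsoOfFin rfl
  obtain ⟨q, hq⟩ := e.surjective ⟨s, hs⟩
  obtain ⟨p, hp⟩ := e.surjective ⟨y, hy⟩
  obtain ⟨r, hr⟩ := e.surjective ⟨z, hz⟩
  have hqp : q < p := e.lt_iff_lt.1 (by rw [hq, hp]; exact hsy)
  have hpr : p < r := e.lt_iff_lt.1 (by rw [hp, hr]; exact hyz)
  obtain ⟨i, hi⟩ : ∃ i, (p : ℕ) = i + 1 := ⟨p - 1, by omega⟩
  have hr2 : i + 2 < S.card := by omega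
  have hey : (e ⟨i + 1, by omega⟩ : ℝ) = y := by
    rw [show (⟨i + 1, _⟩ : Fin S.card) = p from Fin.ext hi.symm, hp]
  have hez : (e ⟨i + 2, hr2⟩ : ℝ) ≤ z := by
    rw [← show (e r : ℝ) = z by rw [hr]]
    exact e.monotone (Fin.mk_le_of_le_val (by omega))
  have hconv := hS i hr2
  refine ⟨e ⟨i, by omega⟩, (e _).2, ?_, by linarith⟩
  rw [← hey]
  exact e.strictMono (Fin.mk_lt_mk.2 (Nat.lt_succ_self i))

section PowWeightSum

variable (M : ℝ) (n : ℕ)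

def powWeightSum (j : ℕ) : ℝ := ∑ t ∈ range j, ((j - t : ℕ) : ℝ) * M ^ (n - t)

lemma powWeightSum_succ_sub (j : ℕ) :
    powWeightSum M n (j + 1) - powWeightSum M n j = ∑ t ∈ range (j + 1), M ^ (n - t) := by
  have hcoeff : ∀ t ∈ range j, ((j + 1 - t : ℕ) : ℝ) = ((j - t : ℕ) : ℝ) + 1 := by
    intro t ht
    rw [mem_range] at ht
    rw [Nat.sub_add_comm ht.le]
    push_cast
    ring
  simp only [powWeightSum, sum_range_succ _ j, Nat.add_sub_cancel_left, Nat.cast_one, one_mul]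
  rw [sum_congr rfl fun t ht => by rw [hcoeff t ht]]
  simp only [add_mul, one_mul, sum_add_distrib]
  ring

lemma geom_sum_pow_sub_mul {j : ℕ} (hj : j ≤ n + 1) :
    (∑ t ∈ range j, M ^ (n - t)) * (M - 1) = M ^ (n + 1) - M ^ (n + 1 - j) := by
  induction j with
  | zero => simp
  | succ j ih =>
    rw [sum_range_succ, add_mul, ih (by omega), show n + 1 - j = n - j + 1 by omega,
      show n + 1 - (j + 1) = n - j by omega, pow_succ]
    ring

variable {M n}

lemma pow_le_sum_range_pow (hM : 0 ≤ M) (j : ℕ) : M ^ n ≤ ∑ t ∈ range (j + 1), M ^ (n - t) :=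
  single_le_sum (f := fun t => M ^ (n - t)) (fun _ _ => pow_nonneg hM _)
    (mem_range.2 j.succ_pos)

lemma sum_range_pow_mul_le (hM : 0 ≤ M) {j : ℕ} (hj : j ≤ n + 1) :
    (∑ t ∈ range j, M ^ (n - t)) * (M - 1) ≤ M ^ (n + 1) := by
  rw [geom_sum_pow_sub_mul M n hj]
  linarith [pow_nonneg hM (n + 1 - j)]

lemma powWeightSum_sub_bounds (hM : 0 ≤ M) {u v : ℕ} (huv : u ≤ v) (hv : v ≤ n) :
    ((v - u : ℕ) : ℝ) * M ^ n ≤ powWeightSum M n v - powWeightSum M n u ∧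
      (powWeightSum M n v - powWeightSum M n u) * (M - 1) ≤ ((v - u : ℕ) : ℝ) * M ^ (n + 1) := by
  have htel := sum_Ico_sub (powWeightSum M n) huv
  simp only [powWeightSum_succ_sub] at htel
  rw [← htel, sum_mul]
  constructor
  · simpa using card_nsmul_le_sum (Ico u v) _ _ fun j _ => pow_le_sum_range_pow hM j
  · simpa using sum_le_card_nsmul (Ico u v) _ _ fun j hj =>
      sum_range_pow_mul_le hM (by simp only [mem_Ico] at hj; omega)

end PowWeightSum

def band (N : ℝ) (k : ℕ) : Set ℝ := Set.Ico (k * N) (k * N + N / 2)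

lemma powWeightSum_sub_mem_band {n u v : ℕ} (hu : 1 ≤ u) (huv : u ≤ v) (hv : v ≤ n) :
    powWeightSum (2 * n) n v - powWeightSum (2 * n) n u ∈ band ((2 * n) ^ n) (v - u) := by
  obtain ⟨hlow, hup⟩ := powWeightSum_sub_bounds (by positivity : (0 : ℝ) ≤ 2 * n) huv hv
  set d := powWeightSum (2 * n) n v - powWeightSum (2 * n) n u
  set N : ℝ := (2 * n) ^ n
  have hn : (1 : ℝ) ≤ n := by exact_mod_cast hu.trans (huv.trans hv)
  have hN : 0 < N := pow_pos (by linarith) n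
  have hk : ((v - u : ℕ) : ℝ) + 1 ≤ n := by exact_mod_cast (by omega : v - u + 1 ≤ n)
  rw [pow_succ, ← mul_assoc] at hup
  refine ⟨hlow, ?_⟩
  by_contra! hd
  nlinarith [mul_le_mul_of_nonneg_right hd (by linarith : (0 : ℝ) ≤ 2 * n - 1)]

section Band

variable {N : ℝ}

lemma sub_lt_of_mem_band {k : ℕ} {x y : ℝ} (hx : x ∈ band N k) (hy : y ∈ band N k) :
    y - x < N / 2 := by
  obtain ⟨hx, -⟩ := hx
  obtain ⟨-, hy⟩ := hy
  linarith

lemma half_lt_sub_of_mem_band (hN : 0 ≤ N) {k l : ℕ} (hkl : k < l) {x y : ℝ}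
    (hx : x ∈ band N k) (hy : y ∈ band N l) : N / 2 < y - x := by
  obtain ⟨-, hx⟩ := hx
  obtain ⟨hy, -⟩ := hy
  have : (k : ℝ) * N + N ≤ l * N := by
    rw [← add_one_mul]
    exact mul_le_mul_of_nonneg_right (by exact_mod_cast hkl) hN
  linarith

lemma nonneg_of_mem_band (hN : 0 ≤ N) {k : ℕ} {x : ℝ} (hx : x ∈ band N k) : 0 ≤ x :=
  (mul_nonneg k.cast_nonneg hN).trans hx.1

end Band

lemma ConvexFinset.subsingleton_inter_band {S : Finset ℝ} (hS : ConvexFinset S) {N : ℝ}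
    (hN : 0 < N) (hband : ∀ x ∈ S, x ≤ 0 ∨ ∃ k, x ∈ band N k) {k₁ k₂ : ℕ} (hk : k₁ < k₂)
    {s : ℝ} (hs : s ∈ S) (hs₁ : s ∈ band N k₁) : (↑S ∩ band N k₂).Subsingleton := by
  suffices ∀ y ∈ ↑S ∩ band N k₂, ∀ z ∈ ↑S ∩ band N k₂, ¬ y < z from
    fun y hy z hz => le_antisymm (not_lt.1 (this z hz y hy)) (not_lt.1 (this y hy z hz))
  rintro y ⟨hyS, hy⟩ z ⟨hzS, hz⟩ hyz
  classical
  set T := S.filter (· ∈ band N k₂)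
  have hyT : y ∈ T := mem_filter.2 ⟨hyS, hy⟩
  set y₀ := T.min' ⟨y, hyT⟩
  obtain ⟨hy₀S, hy₀⟩ := mem_filter.1 (T.min'_mem ⟨y, hyT⟩)
  have hy₀z : y₀ < z := (T.min'_le y hyT).trans_lt hyz
  have hsy₀ : s < y₀ := by linarith [half_lt_sub_of_mem_band hN.le hk hs₁ hy₀]
  obtain ⟨x, hxS, hxy₀, hgap⟩ := hS.exists_sub_lt_sub hs hy₀S hzS hsy₀ hy₀z
  have hgap' : y₀ - x < N / 2 := hgap.trans (sub_lt_of_mem_band hy₀ hz)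
  rcases hband x hxS with hx | ⟨k, hx⟩
  · have : N ≤ k₂ * N := le_mul_of_one_le_left hN.le (by exact_mod_cast Nat.one_le_of_lt hk)
    linarith [hy₀.1]
  · rcases lt_trichotomy k k₂ with hk₂ | rfl | hk₂
    · linarith [half_lt_sub_of_mem_band hN.le hk₂ hx hy₀]
    · exact hxy₀.not_ge (T.min'_le x (mem_filter.2 ⟨hxS, hx⟩))
    · linarith [half_lt_sub_of_mem_band hN.le hk₂ hy₀ hx]

theorem statement10_general (n : ℕ) (hn : 1 ≤ n) (a : ℕ → ℝ)
    (ha : ∀ j, a j = ∑ t ∈ Finset.range j, ((j - t : ℕ) : ℝ) * (2 * (n : ℝ)) ^ (n - t))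
    (A : Finset ℝ) (hA : A = (Finset.Icc 1 n).image a)
    (D : ℕ → Finset ℝ)
    (hD : ∀ k, D k = (Finset.Icc 1 (n - k)).image (fun j => a (j + k) - a j))
    (S : Finset ℝ) (hS : S ⊆ A - A) (hSconv : ConvexFinset S)
    (k₁ k₂ : ℕ) (hlt : k₁ < k₂)
    (h2 : 2 ≤ (S ∩ D k₂).card) :
    S ∩ D k₁ = ∅ := by
  obtain rfl : a = powWeightSum (2 * n) n := funext ha
  have hD_band : ∀ k, ∀ x ∈ D k, x ∈ band ((2 * n) ^ n) k := by
    intro k x hx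
    obtain ⟨j, hj, rfl⟩ := mem_image.1 (hD k ▸ hx)
    rw [mem_Icc] at hj
    simpa using powWeightSum_sub_mem_band hj.1 (j.le_add_right k) (by omega)
  have hS_band : ∀ x ∈ S, x ≤ 0 ∨ ∃ k, x ∈ band ((2 * n) ^ n) k := by
    intro x hx
    subst hA
    obtain ⟨p, hp, q, hq, rfl⟩ := mem_sub.1 (hS hx)
    obtain ⟨v, hv, rfl⟩ := mem_image.1 hp
    obtain ⟨u, hu, rfl⟩ := mem_image.1 hq
    rw [mem_Icc] at hu hv
    rcases le_total u v with huv | hvu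
    · exact Or.inr ⟨_, powWeightSum_sub_mem_band hu.1 huv hv.2⟩
    · have := nonneg_of_mem_band (by positivity) (powWeightSum_sub_mem_band hv.1 hvu hu.2)
      exact Or.inl (by linarith)
  have hN : (0 : ℝ) < (2 * n) ^ n := pow_pos (mul_pos two_pos (Nat.cast_pos.2 hn)) n
  rw [eq_empty_iff_forall_notMem]
  intro s hs
  obtain ⟨y, hy, z, hz, hyz⟩ := one_lt_card.1 h2
  rw [mem_inter] at hs hy hz
  exact hyz (hSconv.subsingleton_inter_band hN hS_band hlt hs.1
    (hD_band _ _ hs.2) ⟨hy.1, hD_band _ _ hy.2⟩ ⟨hz.1, hD_band _ _ hz.2⟩)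

/-- with `a_j = Σ_{t=0}^{j-1} (j-t)(2n)^{n-t}`, `A = {a_1, ..., a_n}` and
`D_k = {a_{j+k} - a_j : 1 ≤ j ≤ n-k}`, if `S ⊆ A - A` is convex, `k₁ < k₂` and
`|S ∩ D_{k₂}| ≥ 2`, then `S ∩ D_{k₁} = ∅`. -/
theorem statement10 (n : ℕ) (hn : 1 ≤ n) (a : ℕ → ℝ)
    (ha : ∀ j, a j = ∑ t ∈ Finset.range j, ((j - t : ℕ) : ℝ) * (2 * (n : ℝ)) ^ (n - t))
    (A : Finset ℝ) (hA : A = (Finset.Icc 1 n).image a)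
    (D : ℕ → Finset ℝ)
    (hD : ∀ k, D k = (Finset.Icc 1 (n - k)).image (fun j => a (j + k) - a j))
    (S : Finset ℝ) (hS : S ⊆ A - A) (hSconv : ConvexFinset S)
    (k₁ k₂ : ℕ) (hk₁ : 1 ≤ k₁) (hk₂ : k₂ ≤ n - 1) (hlt : k₁ < k₂)
    (h2 : 2 ≤ (S ∩ D k₂).card) :
    S ∩ D k₁ = ∅ :=
  statement10_general n hn a ha A hA D hD S hS hSconv k₁ k₂ hlt h2
end

section
/- Let a_j = Σ_{t=0}^{j-1} (j-t)(2n)^{n-t} for 1 ≤ j ≤ n, and for 1 ≤ k ≤ n-1 let D_k = {a_{j+k} - a_j : 1 ≤ j ≤ n-k}. If S ⊆ A - A is convex, then the index set K(S) = {k : S ∩ D_k ≠ ∅} is weakly convex, i.e., writing K(S) = {k_1 < ... < k_m}, one has k_{i+1} - k_i ≥ k_i - k_{i-1} for all 2 ≤ i ≤ m-1. -/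
open Pointwise

/-- A finite set `K = {k_1 < ... < k_m} ⊆ ℕ` is weakly convex if
`k_{i+2} - k_{i+1} ≥ k_{i+1} - k_i` for all `i`. -/
def WeaklyConvexFinset (K : Finset ℕ) : Prop :=
  ∀ i : ℕ, ∀ h : i + 2 < K.card,
    ((K.orderIsoOfFin rfl ⟨i + 2, h⟩ : ℕ) : ℤ) - ((K.orderIsoOfFin rfl ⟨i + 1, by omega⟩ : ℕ) : ℤ) ≥
    ((K.orderIsoOfFin rfl ⟨i + 1, by omega⟩ : ℕ) : ℤ) - ((K.orderIsoOfFin rfl ⟨i, by omega⟩ : ℕ) : ℤ)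


lemma my_geom_lt {Q : ℝ} (hQ : 2 ≤ Q) (n : ℕ) : ∑ e ∈ Finset.range (n+1), Q^e < 2*Q^n := by
  induction n with
  | zero => norm_num
  | succ m ih =>
    rw [Finset.sum_range_succ]
    have h1 : 2*Q^m ≤ Q*Q^m := by
      have : (0:ℝ) < Q^m := by positivity
      nlinarith
    calc ∑ e ∈ Finset.range (m+1), Q^e + Q^(m+1) < 2*Q^m + Q^(m+1) := by linarith
    _ ≤ Q^(m+1) + Q^(m+1) := by rw [pow_succ]; nlinarith [pow_pos (by linarith : (0:ℝ) < Q) m]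
    _ = 2*Q^(m+1) := by ring

lemma step_eq (n : ℕ) (a : ℕ → ℝ)
    (ha : ∀ j, a j = ∑ t ∈ Finset.range j, ((j - t : ℕ) : ℝ) * (2 * (n : ℝ)) ^ (n - t))
    (j : ℕ) : a (j+1) - a j = ∑ t ∈ Finset.range (j+1), (2*(n:ℝ))^(n-t) := by
  rw [ha (j+1), ha j, Finset.sum_range_succ, Finset.sum_range_succ (f := fun t => (2*(n:ℝ))^(n-t))]
  have h1 : ∀ t ∈ Finset.range j,
      ((j + 1 - t : ℕ) : ℝ) * (2*(n:ℝ))^(n-t) = ((j - t : ℕ) : ℝ) * (2*(n:ℝ))^(n-t) + (2*(n:ℝ))^(n-t) := by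
    intro t ht
    rw [Finset.mem_range] at ht
    rw [show j + 1 - t = (j - t) + 1 by omega]
    push_cast
    ring
  rw [Finset.sum_congr rfl h1, Finset.sum_add_distrib]
  simp
  ring


lemma a_smono (n : ℕ) (hn : 1 ≤ n) (a : ℕ → ℝ)
    (ha : ∀ j, a j = ∑ t ∈ Finset.range j, ((j - t : ℕ) : ℝ) * (2 * (n : ℝ)) ^ (n - t)) :
    StrictMono a := by
  apply strictMono_nat_of_lt_succ
  intro j
  have h := step_eq n a ha j
  have hpos : (0:ℝ) < ∑ t ∈ Finset.range (j+1), (2*(n:ℝ))^(n-t) := by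
    apply Finset.sum_pos
    · intro t _
      have : (0:ℝ) < 2*(n:ℝ) := by
        have : (1:ℝ) ≤ (n:ℝ) := by exact_mod_cast hn
        linarith
      positivity
    · exact Finset.nonempty_range_add_one
  linarith

lemma bbound (n : ℕ) (hn : 1 ≤ n) (i : ℕ) (h1 : 1 ≤ i) (h2 : i ≤ n - 1) :
    (2*(n:ℝ))^n + (2*(n:ℝ))^(n-1) ≤ ∑ t ∈ Finset.range (i+1), (2*(n:ℝ))^(n-t) ∧
    ∑ t ∈ Finset.range (i+1), (2*(n:ℝ))^(n-t) < (2*(n:ℝ))^n + 2*(2*(n:ℝ))^(n-1) := by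
  set Q : ℝ := 2*(n:ℝ) with hQdef
  have hQ : 2 ≤ Q := by
    have : (1:ℝ) ≤ (n:ℝ) := by exact_mod_cast hn
    simp only [hQdef]; linarith
  have hQ0 : 0 < Q := by linarith
  constructor
  · have hsub : Finset.range 2 ⊆ Finset.range (i+1) := by
      apply Finset.range_subset_range.mpr; omega
    have := Finset.sum_le_sum_of_subset_of_nonneg hsub
      (f := fun t => Q^(n-t)) (by intro t _ _; positivity)
    calc Q^n + Q^(n-1) = ∑ t ∈ Finset.range 2, Q^(n-t) := by
          rw [Finset.sum_range_succ, Finset.sum_range_succ]; simp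
    _ ≤ _ := this
  · have hsplit : ∑ t ∈ Finset.range (i+1), Q^(n-t)
        = Q^n + ∑ t ∈ Finset.Ico 1 (i+1), Q^(n-t) := by
      rw [Finset.range_eq_Ico, Finset.sum_eq_sum_Ico_succ_bot (by omega)]
      simp
    have htail : ∑ t ∈ Finset.Ico 1 (i+1), Q^(n-t) < 2*Q^(n-1) := by
      have himg : ∑ t ∈ Finset.Ico 1 (i+1), Q^(n-t)
          = ∑ e ∈ (Finset.Ico 1 (i+1)).image (fun t => n - t), Q^e := by
        rw [Finset.sum_image]
        intro t ht t' ht' hee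
        simp only [Finset.mem_coe, Finset.mem_Ico] at ht ht' hee
        omega
      have hsub2 : (Finset.Ico 1 (i+1)).image (fun t => n - t) ⊆ Finset.range n := by
        intro e he
        simp only [Finset.mem_image, Finset.mem_Ico] at he
        obtain ⟨t, ht, rfl⟩ := he
        simp only [Finset.mem_range]
        omega
      have hle : ∑ e ∈ (Finset.Ico 1 (i+1)).image (fun t => n - t), Q^e
          ≤ ∑ e ∈ Finset.range n, Q^e := by
        apply Finset.sum_le_sum_of_subset_of_nonneg hsub2
        intro e _ _; positivity
      obtain ⟨m, rfl⟩ : ∃ m, n = m + 1 := ⟨n - 1, by omega⟩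
      have := my_geom_lt hQ m
      simp only [Nat.add_sub_cancel]
      rw [himg]
      linarith
    linarith [hsplit]

lemma Dbound (n : ℕ) (a : ℕ → ℝ)
    (ha : ∀ j, a j = ∑ t ∈ Finset.range j, ((j - t : ℕ) : ℝ) * (2 * (n : ℝ)) ^ (n - t))
    (k j : ℕ) (hk : 1 ≤ k) (hj : 1 ≤ j) (hjk : j + k ≤ n) :
    (k:ℝ)*((2*(n:ℝ))^n + (2*(n:ℝ))^(n-1)) ≤ a (j+k) - a j ∧
    a (j+k) - a j < (k:ℝ)*((2*(n:ℝ))^n + 2*(2*(n:ℝ))^(n-1)) := by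
  have hn : 1 ≤ n := by omega
  have htel : a (j+k) - a j = ∑ i ∈ Finset.range k, (a (j+(i+1)) - a (j+i)) := by
    rw [Finset.sum_range_sub (fun i => a (j+i))]
    simp
  have hterm : ∀ i ∈ Finset.range k,
      (2*(n:ℝ))^n + (2*(n:ℝ))^(n-1) ≤ a (j+(i+1)) - a (j+i) ∧
      a (j+(i+1)) - a (j+i) < (2*(n:ℝ))^n + 2*(2*(n:ℝ))^(n-1) := by
    intro i hi
    rw [Finset.mem_range] at hi
    rw [show j+(i+1) = (j+i)+1 by omega, step_eq n a ha (j+i)]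
    exact bbound n hn (j+i) (by omega) (by omega)
  constructor
  · calc (k:ℝ)*((2*(n:ℝ))^n + (2*(n:ℝ))^(n-1))
        = ∑ _i ∈ Finset.range k, ((2*(n:ℝ))^n + (2*(n:ℝ))^(n-1)) := by
          rw [Finset.sum_const, Finset.card_range]; ring
    _ ≤ ∑ i ∈ Finset.range k, (a (j+(i+1)) - a (j+i)) :=
          Finset.sum_le_sum (fun i hi => (hterm i hi).1)
    _ = a (j+k) - a j := htel.symm
  · calc a (j+k) - a j = ∑ i ∈ Finset.range k, (a (j+(i+1)) - a (j+i)) := htel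
    _ < ∑ _i ∈ Finset.range k, ((2*(n:ℝ))^n + 2*(2*(n:ℝ))^(n-1)) := by
          apply Finset.sum_lt_sum_of_nonempty
          · exact Finset.nonempty_range_iff.mpr (by omega)
          · exact fun i hi => (hterm i hi).2
    _ = (k:ℝ)*((2*(n:ℝ))^n + 2*(2*(n:ℝ))^(n-1)) := by
          rw [Finset.sum_const, Finset.card_range]; ring

lemma oif_smono {α : Type*} [LinearOrder α] (S : Finset α) {p q : Fin S.card} (h : p < q) :
    (S.orderIsoOfFin rfl p : α) < (S.orderIsoOfFin rfl q : α) :=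
  (S.orderIsoOfFin rfl).strictMono h

lemma oif_surj {α : Type*} [LinearOrder α] (S : Finset α) {x : α} (hx : x ∈ S) :
    ∃ p : Fin S.card, (S.orderIsoOfFin rfl p : α) = x :=
  ⟨(S.orderIsoOfFin rfl).symm ⟨x, hx⟩, by simp⟩

lemma oif_mem {α : Type*} [LinearOrder α] (S : Finset α) (p : Fin S.card) :
    (S.orderIsoOfFin rfl p : α) ∈ S := (S.orderIsoOfFin rfl p).2

lemma diff_mono (S : Finset ℝ) (hSconv : ConvexFinset S) (p q : ℕ) (hpq : p < q) :
    ∀ hq : q + 1 < S.card,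
    (S.orderIsoOfFin rfl ⟨q+1, hq⟩ : ℝ) - (S.orderIsoOfFin rfl ⟨q, by omega⟩ : ℝ) >
    (S.orderIsoOfFin rfl ⟨p+1, by omega⟩ : ℝ) - (S.orderIsoOfFin rfl ⟨p, by omega⟩ : ℝ) := by
  induction q, hpq using Nat.le_induction with
  | base => intro hq; exact hSconv p hq
  | succ q hq ih =>
    intro hq1
    have h1 := hSconv q hq1
    have h2 := ih (by omega)
    linarith


lemma band_bounds (n : ℕ) (a : ℕ → ℝ)
    (ha : ∀ j, a j = ∑ t ∈ Finset.range j, ((j - t : ℕ) : ℝ) * (2 * (n : ℝ)) ^ (n - t))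
    (D : ℕ → Finset ℝ)
    (hD : ∀ k, D k = (Finset.Icc 1 (n - k)).image (fun j => a (j + k) - a j))
    (k : ℕ) (hk1 : 1 ≤ k) (hk2 : k ≤ n - 1) (s : ℝ) (hs : s ∈ D k) :
    (k:ℝ)*((2*(n:ℝ))^n + (2*(n:ℝ))^(n-1)) ≤ s ∧
    s < (k:ℝ)*((2*(n:ℝ))^n + 2*(2*(n:ℝ))^(n-1)) := by
  rw [hD k, Finset.mem_image] at hs
  obtain ⟨j, hj, rfl⟩ := hs
  rw [Finset.mem_Icc] at hj
  exact Dbound n a ha k j hk1 hj.1 (by omega)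

lemma band_sep (n : ℕ) (a : ℕ → ℝ)
    (ha : ∀ j, a j = ∑ t ∈ Finset.range j, ((j - t : ℕ) : ℝ) * (2 * (n : ℝ)) ^ (n - t))
    (D : ℕ → Finset ℝ)
    (hD : ∀ k, D k = (Finset.Icc 1 (n - k)).image (fun j => a (j + k) - a j))
    (k k' : ℕ) (hk1 : 1 ≤ k) (hk2 : k ≤ n - 1) (hk1' : 1 ≤ k') (hk2' : k' ≤ n - 1)
    (hkk : k < k') (s s' : ℝ) (hs : s ∈ D k) (hs' : s' ∈ D k') : s < s' := by
  have h1 := (band_bounds n a ha D hD k hk1 hk2 s hs).2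
  have h2 := (band_bounds n a ha D hD k' hk1' hk2' s' hs').1
  have hn : 2 ≤ n := by omega
  have hE : (0:ℝ) < (2*(n:ℝ))^(n-1) := by
    have : (2:ℝ) ≤ 2*(n:ℝ) := by
      have : (1:ℝ) ≤ (n:ℝ) := by exact_mod_cast (by omega : 1 ≤ n)
      linarith
    positivity
  have hQn : (2*(n:ℝ))^n = (2*(n:ℝ))^(n-1) * (2*(n:ℝ)) := by
    rw [← pow_succ]; congr 1; omega
  -- s < k(Qn+2E) ≤ k'(Qn+E) ≤ s'
  have hkR : (k:ℝ) ≤ n := by exact_mod_cast (by omega : k ≤ n)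
  have hkk' : (k:ℝ) + 1 ≤ k' := by exact_mod_cast hkk
  rw [hQn] at h1 h2
  have h3 : ((k':ℝ) - k - 1) * ((2*(n:ℝ)) * (2*(n:ℝ))^(n-1)) ≥ 0 := by
    apply mul_nonneg (by linarith)
    positivity
  have h4 : ((k':ℝ) - k - 1) * ((2*(n:ℝ))^(n-1)) ≥ 0 :=
    mul_nonneg (by linarith) hE.le
  have h5 : ((n:ℝ) - k) * ((2*(n:ℝ))^(n-1)) ≥ 0 :=
    mul_nonneg (by linarith) hE.le
  have h6 : (n:ℝ) * ((2*(n:ℝ))^(n-1)) ≥ 0 := by positivity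
  nlinarith [h1, h2, h3, h4, h5, h6, hE]


lemma classify (n : ℕ) (hn : 1 ≤ n) (a : ℕ → ℝ)
    (ha : ∀ j, a j = ∑ t ∈ Finset.range j, ((j - t : ℕ) : ℝ) * (2 * (n : ℝ)) ^ (n - t))
    (A : Finset ℝ) (hA : A = (Finset.Icc 1 n).image a)
    (D : ℕ → Finset ℝ)
    (hD : ∀ k, D k = (Finset.Icc 1 (n - k)).image (fun j => a (j + k) - a j))
    (w : ℝ) (hw : w ∈ A - A) (hw0 : 0 < w) :
    ∃ k, 1 ≤ k ∧ k ≤ n - 1 ∧ w ∈ D k := by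
  rw [Finset.mem_sub] at hw
  obtain ⟨x, hx, y, hy, hxy⟩ := hw
  rw [hA, Finset.mem_image] at hx hy
  obtain ⟨j₁, hj₁, rfl⟩ := hx
  obtain ⟨j₂, hj₂, rfl⟩ := hy
  rw [Finset.mem_Icc] at hj₁ hj₂
  have hmono := a_smono n hn a ha
  have hlt : j₂ < j₁ := by
    by_contra hcon
    push_neg at hcon
    have := hmono.monotone hcon
    linarith [hxy]
  refine ⟨j₁ - j₂, by omega, by omega, ?_⟩
  rw [hD, Finset.mem_image]
  refine ⟨j₂, Finset.mem_Icc.mpr ⟨hj₂.1, by omega⟩, ?_⟩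
  rw [show j₂ + (j₁ - j₂) = j₁ by omega]
  exact hxy


lemma adjacent (n : ℕ) (hn : 1 ≤ n) (a : ℕ → ℝ)
    (ha : ∀ j, a j = ∑ t ∈ Finset.range j, ((j - t : ℕ) : ℝ) * (2 * (n : ℝ)) ^ (n - t))
    (A : Finset ℝ) (hA : A = (Finset.Icc 1 n).image a)
    (D : ℕ → Finset ℝ)
    (hD : ∀ k, D k = (Finset.Icc 1 (n - k)).image (fun j => a (j + k) - a j))
    (S : Finset ℝ) (hS : S ⊆ A - A)
    (K : Finset ℕ) (hK : K = (Finset.Icc 1 (n - 1)).filter (fun k => (S ∩ D k).Nonempty))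
    (i' : ℕ) (h1 : i' + 1 < K.card) :
    ∃ (p : ℕ) (hp : p + 1 < S.card),
      ((S.orderIsoOfFin rfl ⟨p, by omega⟩ : ℝ) ∈ D ((K.orderIsoOfFin rfl ⟨i', by omega⟩ : ℕ))) ∧
      (∀ s ∈ S ∩ D ((K.orderIsoOfFin rfl ⟨i', by omega⟩ : ℕ)),
        s ≤ (S.orderIsoOfFin rfl ⟨p, by omega⟩ : ℝ)) ∧
      ((S.orderIsoOfFin rfl ⟨p+1, hp⟩ : ℝ) ∈ D ((K.orderIsoOfFin rfl ⟨i'+1, h1⟩ : ℕ))) ∧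
      (∀ s ∈ S ∩ D ((K.orderIsoOfFin rfl ⟨i'+1, h1⟩ : ℕ)),
        (S.orderIsoOfFin rfl ⟨p+1, hp⟩ : ℝ) ≤ s) := by
  set k1 : ℕ := (K.orderIsoOfFin rfl ⟨i', by omega⟩ : ℕ) with hk1def
  set k2 : ℕ := (K.orderIsoOfFin rfl ⟨i'+1, h1⟩ : ℕ) with hk2def
  have hk1K : k1 ∈ K := oif_mem K _
  have hk2K : k2 ∈ K := oif_mem K _
  have hKmem : ∀ k ∈ K, (1 ≤ k ∧ k ≤ n - 1) ∧ (S ∩ D k).Nonempty := by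
    intro k hk
    rw [hK, Finset.mem_filter, Finset.mem_Icc] at hk
    exact hk
  obtain ⟨⟨hk1a, hk1b⟩, hne1⟩ := hKmem k1 hk1K
  obtain ⟨⟨hk2a, hk2b⟩, hne2⟩ := hKmem k2 hk2K
  have hk12 : k1 < k2 := by
    have h : (⟨i', by omega⟩ : Fin K.card) < ⟨i'+1, h1⟩ := by
      rw [Fin.mk_lt_mk]; omega
    exact oif_smono K h
  obtain ⟨x, hxS, hxD, hxmax⟩ : ∃ x, x ∈ S ∧ x ∈ D k1 ∧ ∀ s ∈ S ∩ D k1, s ≤ x := by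
    refine ⟨(S ∩ D k1).max' hne1, ?_, ?_, fun s hs => Finset.le_max' _ s hs⟩
    · exact (Finset.mem_inter.mp ((S ∩ D k1).max'_mem hne1)).1
    · exact (Finset.mem_inter.mp ((S ∩ D k1).max'_mem hne1)).2
  obtain ⟨y, hyS, hyD, hymin⟩ : ∃ y, y ∈ S ∧ y ∈ D k2 ∧ ∀ s ∈ S ∩ D k2, y ≤ s := by
    refine ⟨(S ∩ D k2).min' hne2, ?_, ?_, fun s hs => Finset.min'_le _ s hs⟩
    · exact (Finset.mem_inter.mp ((S ∩ D k2).min'_mem hne2)).1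
    · exact (Finset.mem_inter.mp ((S ∩ D k2).min'_mem hne2)).2
  have hxy : x < y := band_sep n a ha D hD k1 k2 hk1a hk1b hk2a hk2b hk12 x y hxD hyD
  obtain ⟨p₀, hp₀⟩ := oif_surj S hxS
  obtain ⟨q₀, hq₀⟩ := oif_surj S hyS
  have hpq : (p₀ : ℕ) < (q₀ : ℕ) := by
    by_contra hcon
    push_neg at hcon
    rcases lt_or_eq_of_le hcon with hlt | heq
    · have h := oif_smono S (show q₀ < p₀ from hlt)
      rw [hp₀, hq₀] at h; linarith
    · have h : q₀ = p₀ := Fin.ext heq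
      rw [h, hp₀] at hq₀; linarith
  have hq0val : (q₀ : ℕ) = (p₀ : ℕ) + 1 := by
    by_contra hne
    have hmid : (p₀ : ℕ) + 1 < (q₀ : ℕ) := by omega
    have hq0lt : (q₀ : ℕ) < S.card := q₀.isLt
    obtain ⟨w, hwS, hxw, hwy⟩ :
        ∃ w, w ∈ S ∧ x < w ∧ w < y := by
      refine ⟨(S.orderIsoOfFin rfl ⟨(p₀:ℕ)+1, by omega⟩ : ℝ), oif_mem S _, ?_, ?_⟩
      · rw [← hp₀]; exact oif_smono S (by rw [Fin.mk_lt_mk]; exact Nat.lt_succ_self _)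
      · rw [← hq₀]; exact oif_smono S (by rw [Fin.mk_lt_mk]; omega)
    have hw0 : 0 < w := by
      have hb := (band_bounds n a ha D hD k1 hk1a hk1b x hxD).1
      have hE : (0:ℝ) < (2*(n:ℝ))^n + (2*(n:ℝ))^(n-1) := by
        have h2 : (1:ℝ) ≤ (n:ℝ) := by exact_mod_cast hn
        positivity
      have hk1R : (1:ℝ) ≤ (k1:ℝ) := by exact_mod_cast hk1a
      nlinarith
    obtain ⟨k', hk'a, hk'b, hk'D⟩ := classify n hn a ha A hA D hD w (hS hwS) hw0
    have hk1k' : k1 < k' := by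
      rcases lt_trichotomy k' k1 with h | h | h
      · have := band_sep n a ha D hD k' k1 hk'a hk'b hk1a hk1b h w x hk'D hxD
        linarith
      · subst h
        have := hxmax w (Finset.mem_inter.mpr ⟨hwS, hk'D⟩)
        linarith
      · exact h
    have hk'k2 : k' < k2 := by
      rcases lt_trichotomy k2 k' with h | h | h
      · have := band_sep n a ha D hD k2 k' hk2a hk2b hk'a hk'b h y w hyD hk'D
        linarith
      · subst h
        have := hymin w (Finset.mem_inter.mpr ⟨hwS, hk'D⟩)
        linarith
      · exact h
    have hk'K : k' ∈ K := by
      rw [hK, Finset.mem_filter, Finset.mem_Icc]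
      exact ⟨⟨hk'a, hk'b⟩, ⟨w, Finset.mem_inter.mpr ⟨hwS, hk'D⟩⟩⟩
    obtain ⟨r', hr'⟩ := oif_surj K hk'K
    have hr1 : i' < (r' : ℕ) := by
      by_contra hcon
      push_neg at hcon
      have hle : (⟨i', by omega⟩ : Fin K.card) = r' ∨ r' < (⟨i', by omega⟩ : Fin K.card) := by
        rcases lt_or_eq_of_le hcon with hlt | heq
        · right; rw [Fin.lt_def]; exact hlt
        · left; exact Fin.ext heq.symm
      rcases hle with heq | hlt
      · rw [← heq, ← hk1def] at hr'; omega
      · have := oif_smono K hlt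
        rw [hr', ← hk1def] at this; omega
    have hr2 : (r' : ℕ) < i' + 1 := by
      by_contra hcon
      push_neg at hcon
      have hle : (⟨i'+1, h1⟩ : Fin K.card) = r' ∨ (⟨i'+1, h1⟩ : Fin K.card) < r' := by
        rcases lt_or_eq_of_le hcon with hlt | heq
        · right; rw [Fin.lt_def]; exact hlt
        · left; exact Fin.ext heq
      rcases hle with heq | hlt
      · rw [← heq, ← hk2def] at hr'; omega
      · have := oif_smono K hlt
        rw [hr', ← hk2def] at this; omega
    omega
  have hp : (p₀ : ℕ) + 1 < S.card := by
    have := q₀.isLt; omega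
  have e1 : (S.orderIsoOfFin rfl ⟨(p₀:ℕ), by omega⟩ : ℝ) = x := by
    rw [Fin.eta]; exact hp₀
  have e2 : (S.orderIsoOfFin rfl ⟨(p₀:ℕ)+1, hp⟩ : ℝ) = y := by
    rw [show (⟨(p₀:ℕ)+1, hp⟩ : Fin S.card) = q₀ from Fin.ext hq0val.symm]
    exact hq₀
  refine ⟨(p₀ : ℕ), hp, ?_, ?_, ?_, ?_⟩
  · rw [e1]; exact hxD
  · intro s hs; rw [e1]; exact hxmax s hs
  · rw [e2]; exact hyD
  · intro s hs; rw [e2]; exact hymin s hs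


/-- with `a_j = Σ_{t=0}^{j-1} (j-t)(2n)^{n-t}`, `A = {a_1, ..., a_n}` and
`D_k = {a_{j+k} - a_j : 1 ≤ j ≤ n-k}`, if `S ⊆ A - A` is convex then the index set
`K(S) = {k : 1 ≤ k ≤ n-1, S ∩ D_k ≠ ∅}` is weakly convex. -/
theorem statement11 (n : ℕ) (hn : 1 ≤ n) (a : ℕ → ℝ)
    (ha : ∀ j, a j = ∑ t ∈ Finset.range j, ((j - t : ℕ) : ℝ) * (2 * (n : ℝ)) ^ (n - t))
    (A : Finset ℝ) (hA : A = (Finset.Icc 1 n).image a)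
    (D : ℕ → Finset ℝ)
    (hD : ∀ k, D k = (Finset.Icc 1 (n - k)).image (fun j => a (j + k) - a j))
    (S : Finset ℝ) (hS : S ⊆ A - A) (hSconv : ConvexFinset S)
    (K : Finset ℕ) (hK : K = (Finset.Icc 1 (n - 1)).filter (fun k => (S ∩ D k).Nonempty)) :
    WeaklyConvexFinset K := by
  intro i h
  have h1 : i + 1 < K.card := by omega
  set km : ℕ := (K.orderIsoOfFin rfl ⟨i, by omega⟩ : ℕ) with hkmdef
  set k0 : ℕ := (K.orderIsoOfFin rfl ⟨i+1, by omega⟩ : ℕ) with hk0def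
  set kp : ℕ := (K.orderIsoOfFin rfl ⟨i+2, h⟩ : ℕ) with hkpdef
  obtain ⟨p, hp, hxD, hxmax, hyD, hymin⟩ := adjacent n hn a ha A hA D hD S hS K hK i h1
  obtain ⟨q, hq, hy'D, hy'max, hzD, hzmin⟩ := adjacent n hn a ha A hA D hD S hS K hK (i+1) h
  clear hzmin hymin hxmax
  -- identify band indices
  have hKmem : ∀ k ∈ K, 1 ≤ k ∧ k ≤ n - 1 := by
    intro k hk
    rw [hK, Finset.mem_filter, Finset.mem_Icc] at hk
    exact hk.1
  obtain ⟨hkma, hkmb⟩ := hKmem km (oif_mem K _)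
  obtain ⟨hk0a, hk0b⟩ := hKmem k0 (oif_mem K _)
  obtain ⟨hkpa, hkpb⟩ := hKmem kp (oif_mem K _)
  have hmono0 : km < k0 := oif_smono K (show (⟨i, by omega⟩ : Fin K.card) < ⟨i+1, by omega⟩ by
    rw [Fin.mk_lt_mk]; omega)
  have hmono1 : k0 < kp := oif_smono K (show (⟨i+1, by omega⟩ : Fin K.card) < ⟨i+2, h⟩ by
    rw [Fin.mk_lt_mk]; omega)
  -- p + 1 ≤ q
  have hpq : p + 1 ≤ q := by
    have hmem : (S.orderIsoOfFin rfl ⟨p+1, hp⟩ : ℝ) ∈ S ∩ D k0 :=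
      Finset.mem_inter.mpr ⟨oif_mem S _, hyD⟩
    have hle := hy'max _ hmem
    by_contra hcon
    push_neg at hcon
    have := oif_smono S (show (⟨q, by omega⟩ : Fin S.card) < ⟨p+1, hp⟩ by
      rw [Fin.mk_lt_mk]; omega)
    linarith
  have hd := diff_mono S hSconv p q (by omega) hq
  -- band bounds
  have bx := (band_bounds n a ha D hD km hkma hkmb _ hxD).2
  have by1 := (band_bounds n a ha D hD k0 hk0a hk0b _ hyD).1
  have by2 := (band_bounds n a ha D hD k0 hk0a hk0b _ hy'D).1
  have bz := (band_bounds n a ha D hD kp hkpa hkpb _ hzD).2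
  -- final arithmetic
  by_contra hcon
  push_neg at hcon
  have hA1 : kp + km + 1 ≤ 2 * k0 := by omega
  have hR1 : (kp:ℝ) + (km:ℝ) + 1 ≤ 2*(k0:ℝ) := by exact_mod_cast hA1
  have hR2 : (k0:ℝ) + 1 ≤ (n:ℝ) := by exact_mod_cast (show k0 + 1 ≤ n by omega)
  have hE : (0:ℝ) < (2*(n:ℝ))^(n-1) := by
    have h2 : (1:ℝ) ≤ (n:ℝ) := by exact_mod_cast hn
    positivity
  have hQn : (2*(n:ℝ))^n = (2*(n:ℝ))^(n-1) * (2*(n:ℝ)) := by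
    rw [← pow_succ]; congr 1; omega
  rw [hQn] at bx by1 by2 bz
  have hH1 : (2*(k0:ℝ) - 1 - ((kp:ℝ) + (km:ℝ))) * ((2*(n:ℝ)+2) * (2*(n:ℝ))^(n-1)) ≥ 0 := by
    apply mul_nonneg (by linarith)
    have h2 : (0:ℝ) ≤ (n:ℝ) := Nat.cast_nonneg n
    positivity
  have hH2 : ((n:ℝ) + 1 - (k0:ℝ)) * (2*(2*(n:ℝ))^(n-1)) ≥ 0 := by
    apply mul_nonneg (by linarith)
    positivity
  nlinarith [hd, bx, by1, by2, bz, hH1, hH2, hE]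
end

section
/- Let a_j = Σ_{t=0}^{j-1} (j-t)(2n)^{n-t} for 1 ≤ j ≤ n, and for 1 ≤ k ≤ n-1 let D_k = {a_{j+k} - a_j : 1 ≤ j ≤ n-k}. If S ⊆ A - A is convex, then |S ∩ D_k| ≤ 2 for every k with 1 ≤ k ≤ n-1. -/
open Pointwise

/-!
Put `c = 2n`, so that `a_j = ∑_{t<j} (j - t) c^(n-t)` is a base-`c` numeral with digits at most
`n < c`, and `a_{j+1} - a_j = ∑_{t ≤ j} c^(n-t)`. Hence `a_i - a_j ∈ [(i-j) c^n, (i-j+1) c^n)` for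
`j ≤ i ≤ n`: the elements of `A - A` in the window `[k c^n, (k+1) c^n)` are exactly those of `D_k`.
So three consecutive elements `x < y < z` of `S ∩ D_k` are consecutive in `S` too, and convexity
gives `y - x < z - y`. On the other hand, with `d_j = a_{j+k} - a_j` we have
`d_{j+1} - d_j = ∑_{j < t ≤ j+k} c^(n-t)`. For `j₁ < j₂ < j₃` this makes
`d_{j₂} - d_{j₁} ≥ c^(n-j₂)`, while `d_{j₃} - d_{j₂}` is a numeral with digits at most `n < c` in
the positions below `c^(n-j₂)`, hence smaller than `c^(n-j₂)`.
-/

open Finset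
open scoped fwdDiff

theorem Finset.exists_lt_lt_of_two_lt_card {α : Type*} [LinearOrder α] {T : Finset α}
    (hT : 2 < #T) :
    ∃ x ∈ T, ∃ y ∈ T, ∃ z ∈ T, x < y ∧ y < z ∧ ∀ s ∈ T, x < s → s < z → s = y := by
  set f := T.orderEmbOfFin rfl
  refine ⟨f ⟨0, by omega⟩, T.orderEmbOfFin_mem rfl _, f ⟨1, by omega⟩, T.orderEmbOfFin_mem rfl _,
    f ⟨2, hT⟩, T.orderEmbOfFin_mem rfl _, f.strictMono (by simp [Fin.lt_def]),
    f.strictMono (by simp [Fin.lt_def]), ?_⟩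
  intro s hs h0 h2
  obtain ⟨i, rfl⟩ : s ∈ Set.range f := (T.range_orderEmbOfFin rfl).symm ▸ hs
  rw [f.lt_iff_lt, Fin.lt_def] at h0 h2
  congr 1
  ext
  simp only at h0 h2 ⊢
  omega

theorem ConvexFinset.sub_lt_sub {S : Finset ℝ} (hS : ConvexFinset S) {x y z : ℝ} (hx : x ∈ S)
    (hy : y ∈ S) (hz : z ∈ S) (hxy : x < y) (hyz : y < z)
    (hconsec : ∀ s ∈ S, x < s → s < z → s = y) : y - x < z - y := by
  set e := S.orderIsoOfFin rfl
  have hxy' : (⟨x, hx⟩ : S) ⋖ ⟨y, hy⟩ :=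
    ⟨hxy, fun s hxs hsy => hsy.ne (Subtype.ext (hconsec s s.2 hxs (lt_trans (α := ℝ) hsy hyz)))⟩
  have hyz' : (⟨y, hy⟩ : S) ⋖ ⟨z, hz⟩ :=
    ⟨hyz, fun s hys hsz => hys.ne' (Subtype.ext (hconsec s s.2 (lt_trans (α := ℝ) hxy hys) hsz))⟩
  obtain ⟨⟨i, hi⟩, hix⟩ := e.surjective ⟨x, hx⟩
  obtain ⟨⟨j, hj⟩, hjy⟩ := e.surjective ⟨y, hy⟩
  obtain ⟨⟨l, hl⟩, hlz⟩ := e.surjective ⟨z, hz⟩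
  rw [← hix, ← hjy, apply_covBy_apply_iff, Fin.covBy_iff, Nat.covBy_iff_add_one_eq] at hxy'
  rw [← hjy, ← hlz, apply_covBy_apply_iff, Fin.covBy_iff, Nat.covBy_iff_add_one_eq] at hyz'
  subst hxy' hyz'
  have := hS i hl
  rwa [hix, hjy, hlz] at this

theorem mul_le_sub_of_forall_le_fwdDiff {f : ℕ → ℝ} {L : ℝ} {p q : ℕ} (hpq : p ≤ q)
    (h : ∀ l ∈ Ico p q, L ≤ Δ_[1] f l) : ((q - p : ℕ) : ℝ) * L ≤ f q - f p := by
  rw [← sum_Ico_sub f hpq, ← Nat.card_Ico, ← nsmul_eq_mul]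
  exact card_nsmul_le_sum _ _ _ h

theorem sub_le_mul_of_forall_fwdDiff_le {f : ℕ → ℝ} {U : ℝ} {p q : ℕ} (hpq : p ≤ q)
    (h : ∀ l ∈ Ico p q, Δ_[1] f l ≤ U) : f q - f p ≤ ((q - p : ℕ) : ℝ) * U := by
  rw [← sum_Ico_sub f hpq, ← Nat.card_Ico, ← nsmul_eq_mul]
  exact sum_le_card_nsmul _ _ _ h

theorem geom_sum_Ico_pow_tsub_mul (c : ℝ) (n j : ℕ) :
    (∑ t ∈ Ico (j + 1) (n + 1), c ^ (n - t)) * (c - 1) = c ^ (n - j) - 1 := by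
  rw [sum_Ico_reflect (fun e => c ^ e) (j + 1) le_rfl, Nat.sub_self, Nat.add_sub_add_right,
    Nat.Ico_zero_eq_range, geom_sum_mul]

noncomputable def iteratedPartialSum (c : ℝ) (n j : ℕ) : ℝ :=
  ∑ t ∈ range j, ((j - t : ℕ) : ℝ) * c ^ (n - t)

namespace iteratedPartialSum

variable {c : ℝ} {n k : ℕ}

theorem fwdDiff_one_apply (j : ℕ) :
    Δ_[1] (iteratedPartialSum c n) j = ∑ t ∈ range (j + 1), c ^ (n - t) := by
  have hstep : ∀ t ∈ range j,
      ((j + 1 - t : ℕ) : ℝ) * c ^ (n - t) = ((j - t : ℕ) : ℝ) * c ^ (n - t) + c ^ (n - t) := by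
    intro t ht
    rw [Nat.sub_add_comm (mem_range.1 ht).le]
    push_cast
    ring
  rw [fwdDiff, iteratedPartialSum, iteratedPartialSum, sum_range_succ, sum_congr rfl hstep,
    sum_add_distrib, sum_range_succ _ j]
  simp only [add_tsub_cancel_left, Nat.cast_one, one_mul]
  ring

theorem monotone (hc : 0 ≤ c) : Monotone (iteratedPartialSum c n) :=
  monotone_nat_of_le_succ fun j => sub_nonneg.1 <| show 0 ≤ Δ_[1] (iteratedPartialSum c n) j by
    rw [fwdDiff_one_apply]
    exact sum_nonneg fun _ _ => pow_nonneg hc _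

theorem fwdDiff_one_fwdDiff_apply (k j : ℕ) :
    Δ_[1] (Δ_[k] (iteratedPartialSum c n)) j = ∑ t ∈ Ico (j + 1) (j + k + 1), c ^ (n - t) := by
  rw [sum_Ico_eq_sub _ (by omega), ← fwdDiff_one_apply, ← fwdDiff_one_apply]
  simp only [fwdDiff]
  rw [add_right_comm]
  ring

theorem strictMono_fwdDiff (hc : 0 < c) (hk : 1 ≤ k) :
    StrictMono (Δ_[k] (iteratedPartialSum c n)) :=
  strictMono_nat_of_lt_succ fun j =>
    sub_pos.1 <| show 0 < Δ_[1] (Δ_[k] (iteratedPartialSum c n)) j by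
      rw [fwdDiff_one_fwdDiff_apply]
      exact sum_pos (fun _ _ => pow_pos hc _) (nonempty_Ico.2 (by omega))

theorem pow_le_fwdDiff_sub (hc : 1 ≤ c) (hk : 1 ≤ k) {j₁ j₂ : ℕ} (hj : j₁ < j₂) :
    c ^ (n - j₂) ≤ Δ_[k] (iteratedPartialSum c n) j₂ - Δ_[k] (iteratedPartialSum c n) j₁ := by
  have hmono := (strictMono_fwdDiff (n := n) (by linarith) hk).monotone (Nat.succ_le_of_lt hj)
  have hstep := fwdDiff_one_fwdDiff_apply (c := c) (n := n) k j₁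
  have hterm : c ^ (n - (j₁ + 1)) ≤ ∑ t ∈ Ico (j₁ + 1) (j₁ + k + 1), c ^ (n - t) :=
    single_le_sum (f := fun t => c ^ (n - t)) (fun _ _ => by positivity)
      (left_mem_Ico.2 (by omega))
  have hpow : c ^ (n - j₂) ≤ c ^ (n - (j₁ + 1)) := pow_le_pow_right₀ hc (by omega)
  rw [fwdDiff] at hstep
  linarith

theorem fwdDiff_sub_lt_pow (hc : (n : ℝ) + 1 ≤ c) {j₂ j₃ : ℕ} (hj : j₂ ≤ j₃)
    (hj₃ : j₃ + k ≤ n) :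
    Δ_[k] (iteratedPartialSum c n) j₃ - Δ_[k] (iteratedPartialSum c n) j₂ < c ^ (n - j₂) := by
  set T := ∑ t ∈ Ico (j₂ + 1) (n + 1), c ^ (n - t)
  have hT : 0 ≤ T := sum_nonneg fun _ _ => pow_nonneg (by linarith) _
  have hstep : ∀ j ∈ Ico j₂ j₃, Δ_[1] (Δ_[k] (iteratedPartialSum c n)) j ≤ T := by
    intro j hj
    rw [mem_Ico] at hj
    rw [fwdDiff_one_fwdDiff_apply]
    exact sum_le_sum_of_subset_of_nonneg (Ico_subset_Ico (by omega) (by omega))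
      fun _ _ _ => pow_nonneg (by linarith) _
  have hlen : ((j₃ - j₂ : ℕ) : ℝ) ≤ c - 1 := by
    have : ((j₃ - j₂ : ℕ) : ℝ) ≤ n := by exact_mod_cast (by omega : j₃ - j₂ ≤ n)
    linarith
  calc _ ≤ ((j₃ - j₂ : ℕ) : ℝ) * T := sub_le_mul_of_forall_fwdDiff_le hj hstep
    _ ≤ T * (c - 1) := by rw [mul_comm]; exact mul_le_mul_of_nonneg_left hlen hT
    _ < c ^ (n - j₂) := by rw [geom_sum_Ico_pow_tsub_mul]; linarith

theorem sub_mem_Ico (hc : (n : ℝ) + 1 ≤ c) {i j : ℕ} (hji : j ≤ i) (hi : i ≤ n) :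
    iteratedPartialSum c n i - iteratedPartialSum c n j ∈
      Set.Ico (((i - j : ℕ) : ℝ) * c ^ n) (((i - j : ℕ) + 1) * c ^ n) := by
  have hc₀ : 0 ≤ c := by linarith
  set T := ∑ t ∈ Ico 1 (n + 1), c ^ (n - t)
  have hT : 0 ≤ T := sum_nonneg fun _ _ => pow_nonneg hc₀ _
  have hstep : ∀ l ∈ Ico j i,
      c ^ n ≤ Δ_[1] (iteratedPartialSum c n) l ∧ Δ_[1] (iteratedPartialSum c n) l ≤ c ^ n + T := by
    intro l hl
    rw [mem_Ico] at hl
    rw [fwdDiff_one_apply]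
    constructor
    · simpa using single_le_sum (f := fun t => c ^ (n - t)) (fun _ _ => pow_nonneg hc₀ _)
        (mem_range.2 (Nat.succ_pos l))
    · calc ∑ t ∈ range (l + 1), c ^ (n - t) ≤ ∑ t ∈ range (n + 1), c ^ (n - t) :=
            sum_le_sum_of_subset_of_nonneg (range_subset_range.2 (by omega))
              fun _ _ _ => pow_nonneg hc₀ _
        _ = c ^ n + T := by
            rw [range_eq_Ico, sum_eq_sum_Ico_succ_bot (Nat.succ_pos n), Nat.sub_zero]
  have hlen : ((i - j : ℕ) : ℝ) ≤ c - 1 := by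
    have : ((i - j : ℕ) : ℝ) ≤ n := by exact_mod_cast (by omega : i - j ≤ n)
    linarith
  refine ⟨mul_le_sub_of_forall_le_fwdDiff hji fun l hl => (hstep l hl).1, ?_⟩
  calc _ ≤ ((i - j : ℕ) : ℝ) * (c ^ n + T) :=
        sub_le_mul_of_forall_fwdDiff_le hji fun l hl => (hstep l hl).2
    _ ≤ ((i - j : ℕ) : ℝ) * c ^ n + T * (c - 1) := by
        rw [mul_add, mul_comm _ T]; gcongr
    _ < ((i - j : ℕ) + 1) * c ^ n := by
        rw [geom_sum_Ico_pow_tsub_mul, Nat.sub_zero]; linarith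

theorem fwdDiff_mem_Ico (hc : (n : ℝ) + 1 ≤ c) {j : ℕ} (hjk : j + k ≤ n) :
    Δ_[k] (iteratedPartialSum c n) j ∈ Set.Ico ((k : ℝ) * c ^ n) ((k + 1) * c ^ n) := by
  have h := sub_mem_Ico hc (Nat.le_add_right j k) hjk
  rw [Nat.add_sub_cancel_left] at h
  exact h

theorem eq_add_of_sub_mem_Ico (hc : (n : ℝ) + 1 ≤ c) (hk : 1 ≤ k) {i j : ℕ} (hi : i ≤ n)
    (h : iteratedPartialSum c n i - iteratedPartialSum c n j ∈
      Set.Ico ((k : ℝ) * c ^ n) ((k + 1) * c ^ n)) : i = j + k := by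
  have hcn : 0 < c ^ n := pow_pos (by linarith) n
  have hji : j < i := by
    by_contra! hij
    have hk' : (1 : ℝ) ≤ k := by exact_mod_cast hk
    have := monotone (c := c) (n := n) (by linarith) hij
    nlinarith [h.1]
  obtain ⟨hlo, hhi⟩ := sub_mem_Ico hc hji.le hi
  have h₁ : ((i - j : ℕ) : ℝ) < k + 1 := lt_of_mul_lt_mul_right (hlo.trans_lt h.2) hcn.le
  have h₂ : (k : ℝ) < (i - j : ℕ) + 1 := lt_of_mul_lt_mul_right (h.1.trans_lt hhi) hcn.le
  have h₁' : i - j < k + 1 := by exact_mod_cast h₁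
  have h₂' : k < i - j + 1 := by exact_mod_cast h₂
  omega

theorem mem_image_fwdDiff_of_mem_sub (hc : (n : ℝ) + 1 ≤ c) (hk : 1 ≤ k) {s : ℝ}
    (hs : s ∈ (Icc 1 n).image (iteratedPartialSum c n) - (Icc 1 n).image (iteratedPartialSum c n))
    (hwin : s ∈ Set.Ico ((k : ℝ) * c ^ n) ((k + 1) * c ^ n)) :
    s ∈ (Icc 1 (n - k)).image (Δ_[k] (iteratedPartialSum c n)) := by
  obtain ⟨u, hu, v, hv, rfl⟩ := mem_sub.1 hs
  obtain ⟨i, hi, rfl⟩ := mem_image.1 hu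
  obtain ⟨j, hj, rfl⟩ := mem_image.1 hv
  rw [mem_Icc] at hi hj
  obtain rfl := eq_add_of_sub_mem_Ico hc hk hi.2 hwin
  exact mem_image.2 ⟨j, mem_Icc.2 ⟨hj.1, by omega⟩, rfl⟩

theorem mem_Ico_of_mem_image_fwdDiff (hc : (n : ℝ) + 1 ≤ c) {s : ℝ}
    (hs : s ∈ (Icc 1 (n - k)).image (Δ_[k] (iteratedPartialSum c n))) :
    s ∈ Set.Ico ((k : ℝ) * c ^ n) ((k + 1) * c ^ n) := by
  obtain ⟨j, hj, rfl⟩ := mem_image.1 hs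
  rw [mem_Icc] at hj
  exact fwdDiff_mem_Ico hc (by omega)

theorem sub_lt_sub_of_mem_image_fwdDiff (hc : (n : ℝ) + 1 ≤ c) (hk : 1 ≤ k) {x y z : ℝ}
    (hx : x ∈ (Icc 1 (n - k)).image (Δ_[k] (iteratedPartialSum c n)))
    (hy : y ∈ (Icc 1 (n - k)).image (Δ_[k] (iteratedPartialSum c n)))
    (hz : z ∈ (Icc 1 (n - k)).image (Δ_[k] (iteratedPartialSum c n)))
    (hxy : x < y) (hyz : y < z) : z - y < y - x := by
  obtain ⟨j₁, -, rfl⟩ := mem_image.1 hx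
  obtain ⟨j₂, -, rfl⟩ := mem_image.1 hy
  obtain ⟨j₃, hj₃, rfl⟩ := mem_image.1 hz
  rw [mem_Icc] at hj₃
  have hmono := strictMono_fwdDiff (c := c) (n := n) (by linarith) hk
  calc _ < c ^ (n - j₂) := fwdDiff_sub_lt_pow hc (hmono.lt_iff_lt.1 hyz).le (by omega)
    _ ≤ _ := pow_le_fwdDiff_sub (by linarith) hk (hmono.lt_iff_lt.1 hxy)

end iteratedPartialSum

theorem statement12_general (n : ℕ) (a : ℕ → ℝ)
    (ha : ∀ j, a j = ∑ t ∈ Finset.range j, ((j - t : ℕ) : ℝ) * (2 * (n : ℝ)) ^ (n - t))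
    (A : Finset ℝ) (hA : A = (Finset.Icc 1 n).image a)
    (D : ℕ → Finset ℝ)
    (hD : ∀ k, D k = (Finset.Icc 1 (n - k)).image (fun j => a (j + k) - a j))
    (S : Finset ℝ) (hS : S ⊆ A - A) (hSconv : ConvexFinset S) :
    ∀ k, 1 ≤ k → k ≤ n - 1 → (S ∩ D k).card ≤ 2 := by
  intro k hk _
  obtain rfl : a = iteratedPartialSum (2 * n) n := funext ha
  have hc : (n : ℝ) + 1 ≤ 2 * n := by
    have : (1 : ℝ) ≤ n := by exact_mod_cast (by omega : 1 ≤ n)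
    linarith
  subst hA
  rw [hD k]
  by_contra! h3
  obtain ⟨x, hx, y, hy, z, hz, hxy, hyz, hbetween⟩ := exists_lt_lt_of_two_lt_card h3
  rw [mem_inter] at hx hy hz
  have hxwin := iteratedPartialSum.mem_Ico_of_mem_image_fwdDiff hc hx.2
  have hzwin := iteratedPartialSum.mem_Ico_of_mem_image_fwdDiff hc hz.2
  have hconsec : ∀ s ∈ S, x < s → s < z → s = y := fun s hs hxs hsz =>
    hbetween s (mem_inter.2 ⟨hs, iteratedPartialSum.mem_image_fwdDiff_of_mem_sub hc hk (hS hs)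
      (Set.ordConnected_Ico.out hxwin hzwin ⟨hxs.le, hsz.le⟩)⟩) hxs hsz
  exact (hSconv.sub_lt_sub hx.1 hy.1 hz.1 hxy hyz hconsec).not_gt
    (iteratedPartialSum.sub_lt_sub_of_mem_image_fwdDiff hc hk hx.2 hy.2 hz.2 hxy hyz)

/-- with `a_j = Σ_{t=0}^{j-1} (j-t)(2n)^{n-t}`, `A = {a_1, ..., a_n}` and
`D_k = {a_{j+k} - a_j : 1 ≤ j ≤ n-k}`, if `S ⊆ A - A` is convex then `|S ∩ D_k| ≤ 2`
for every `1 ≤ k ≤ n-1`. -/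
theorem statement12 (n : ℕ) (hn : 1 ≤ n) (a : ℕ → ℝ)
    (ha : ∀ j, a j = ∑ t ∈ Finset.range j, ((j - t : ℕ) : ℝ) * (2 * (n : ℝ)) ^ (n - t))
    (A : Finset ℝ) (hA : A = (Finset.Icc 1 n).image a)
    (D : ℕ → Finset ℝ)
    (hD : ∀ k, D k = (Finset.Icc 1 (n - k)).image (fun j => a (j + k) - a j))
    (S : Finset ℝ) (hS : S ⊆ A - A) (hSconv : ConvexFinset S) :
    ∀ k, 1 ≤ k → k ≤ n - 1 → (S ∩ D k).card ≤ 2 :=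
  statement12_general n a ha A hA D hD S hS hSconv
end

section
/- Let a_j = Σ_{t=0}^{j-1} (j-t)(2n)^{n-t} for 1 ≤ j ≤ n, and let A = {a_1, ..., a_n}. Suppose M ⊂ A × A is a matching and S = {a - b : (a,b) ∈ M} is convex. Then the index set K(S) = {k : S contains some a_{j+k} - a_j} does not contain four consecutive elements forming an arithmetic progression. -/
open Classical

namespace Stmt13Aux

noncomputable def F (S : Finset ℝ) (i : ℕ) : ℝ :=
  if h : i < S.card then (S.orderIsoOfFin rfl ⟨i, h⟩ : ℝ) else 0

lemma F_eq (S : Finset ℝ) (i : ℕ) (h : i < S.card) :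
    F S i = (S.orderIsoOfFin rfl ⟨i, h⟩ : ℝ) := dif_pos h

lemma conv' (S : Finset ℝ) (hS : ConvexFinset S) (i : ℕ) (h : i + 2 < S.card) :
    F S (i+1) - F S i < F S (i+2) - F S (i+1) := by
  rw [F_eq S i (by omega), F_eq S (i+1) (by omega), F_eq S (i+2) h]
  exact hS i h

lemma gapmono (S : Finset ℝ) (hS : ConvexFinset S) :
    ∀ i i' : ℕ, i < i' → i' + 1 < S.card →
      F S (i+1) - F S i < F S (i'+1) - F S i' := by
  intro i i' hii
  induction i' with
  | zero => omega
  | succ m ih =>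
    intro hcard
    rcases Nat.lt_or_ge i m with hlt | hge
    · have h1 := ih hlt (by omega)
      have h2 := conv' S hS m (by omega)
      have e : m + 1 + 1 = m + 2 := by omega
      rw [e] at hcard ⊢
      linarith
    · have : i = m := by omega
      subst this
      have h2 := conv' S hS i (by omega)
      have e : i + 1 + 1 = i + 2 := by omega
      rw [e]
      exact h2

lemma idx_F (S : Finset ℝ) (u : ℝ) (hu : u ∈ S) :
    F S (((S.orderIsoOfFin rfl).symm ⟨u, hu⟩ : Fin S.card) : ℕ) = u := by
  rw [F_eq S _ (Fin.is_lt _)]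
  have : (⟨(((S.orderIsoOfFin rfl).symm ⟨u, hu⟩ : Fin S.card) : ℕ), Fin.is_lt _⟩ : Fin S.card)
      = (S.orderIsoOfFin rfl).symm ⟨u, hu⟩ := by
    apply Fin.ext; rfl
  rw [this, OrderIso.apply_symm_apply]

lemma consec_idx (S : Finset ℝ) (u v : ℝ) (hu : u ∈ S) (hv : v ∈ S) (huv : u < v)
    (hcons : ∀ t ∈ S, t ≤ u ∨ v ≤ t) :
    (((S.orderIsoOfFin rfl).symm ⟨v, hv⟩ : Fin S.card) : ℕ)
      = (((S.orderIsoOfFin rfl).symm ⟨u, hu⟩ : Fin S.card) : ℕ) + 1 := by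
  set o := S.orderIsoOfFin rfl with ho
  have hlt : (o.symm ⟨u, hu⟩ : Fin S.card) < o.symm ⟨v, hv⟩ :=
    o.symm.lt_iff_lt.mpr (Subtype.mk_lt_mk.mpr huv)
  have hltn : ((o.symm ⟨u, hu⟩ : Fin S.card) : ℕ) < ((o.symm ⟨v, hv⟩ : Fin S.card) : ℕ) := hlt
  by_contra hne
  have h1 : ((o.symm ⟨u, hu⟩ : Fin S.card) : ℕ) + 1 < ((o.symm ⟨v, hv⟩ : Fin S.card) : ℕ) := by
    omega
  have hcard : ((o.symm ⟨u, hu⟩ : Fin S.card) : ℕ) + 1 < S.card := lt_trans h1 (Fin.is_lt _)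
  set w := o ⟨((o.symm ⟨u, hu⟩ : Fin S.card) : ℕ) + 1, hcard⟩ with hw
  have hwu : u < (w : ℝ) := by
    have : (o.symm ⟨u, hu⟩ : Fin S.card) < ⟨_ + 1, hcard⟩ := by
      apply Fin.lt_def.mpr; simp
    have h3 : o (o.symm ⟨u, hu⟩) < o ⟨_ + 1, hcard⟩ := o.lt_iff_lt.mpr this
    rwa [OrderIso.apply_symm_apply] at h3
  have hwv : (w : ℝ) < v := by
    have : (⟨_ + 1, hcard⟩ : Fin S.card) < o.symm ⟨v, hv⟩ := by
      apply Fin.lt_def.mpr; simpa using h1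
    have h3 : o ⟨_ + 1, hcard⟩ < o (o.symm ⟨v, hv⟩) := o.lt_iff_lt.mpr this
    rwa [OrderIso.apply_symm_apply] at h3
  rcases hcons (w : ℝ) w.2 with h | h
  · linarith
  · linarith

lemma conv_key (S : Finset ℝ) (hS : ConvexFinset S) (p q r s : ℝ)
    (hp : p ∈ S) (hq : q ∈ S) (hr : r ∈ S) (hs : s ∈ S)
    (hpq : p < q) (hrs : r < s) (hqr : q ≤ r)
    (hc1 : ∀ t ∈ S, t ≤ p ∨ q ≤ t) (hc2 : ∀ t ∈ S, t ≤ r ∨ s ≤ t) :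
    q - p < s - r := by
  set o := S.orderIsoOfFin rfl with ho
  set ip := ((o.symm ⟨p, hp⟩ : Fin S.card) : ℕ) with hip
  set ir := ((o.symm ⟨r, hr⟩ : Fin S.card) : ℕ) with hir
  have hiq : ((o.symm ⟨q, hq⟩ : Fin S.card) : ℕ) = ip + 1 := consec_idx S p q hp hq hpq hc1
  have his : ((o.symm ⟨s, hs⟩ : Fin S.card) : ℕ) = ir + 1 := consec_idx S r s hr hs hrs hc2
  have hpr : p < r := lt_of_lt_of_le hpq hqr
  have hiplt : ip < ir := by
    have : (o.symm ⟨p, hp⟩ : Fin S.card) < o.symm ⟨r, hr⟩ :=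
      o.symm.lt_iff_lt.mpr (Subtype.mk_lt_mk.mpr hpr)
    exact this
  have hcard : ir + 1 < S.card := by
    rw [← his]; exact Fin.is_lt _
  have hkey := gapmono S hS ip ir hiplt hcard
  have e1 : F S ip = p := idx_F S p hp
  have e2 : F S (ip + 1) = q := by rw [← hiq]; exact idx_F S q hq
  have e3 : F S ir = r := idx_F S r hr
  have e4 : F S (ir + 1) = s := by rw [← his]; exact idx_F S s hs
  rw [e1, e2, e3, e4] at hkey
  exact hkey

noncomputable def Cf (n : ℕ) : ℝ := (2*(n:ℝ))^(n+1)/((2*(n:ℝ))-1)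

noncomputable def Gf (n q p : ℕ) : ℝ :=
  ((2*(n:ℝ))^(n+1-q) - (2*(n:ℝ))^(n+1-p))/((2*(n:ℝ))-1)^2

lemma Xfour (n : ℕ) (hn : 2 ≤ n) : (4:ℝ) ≤ 2*(n:ℝ) := by
  have : (2:ℝ) ≤ (n:ℝ) := by exact_mod_cast hn
  linarith

lemma Cpos (n : ℕ) (hn : 2 ≤ n) : 0 < Cf n := by
  have hX := Xfour n hn
  unfold Cf
  apply div_pos (pow_pos (by linarith) _) (by linarith)

lemma Gpos (n q p : ℕ) (hn : 2 ≤ n) (hqp : q < p) (hpn : p ≤ n) :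
    0 < Gf n q p := by
  have hX := Xfour n hn
  unfold Gf
  apply div_pos
  · exact sub_pos.mpr (pow_lt_pow_right₀ (by linarith) (by omega))
  · have : (0:ℝ) < 2*(n:ℝ) - 1 := by linarith
    positivity

lemma Ghalf (n q p : ℕ) (hn : 2 ≤ n) (hq : 1 ≤ q) (hqp : q < p) (hpn : p ≤ n) :
    Gf n q p < Cf n / 2 := by
  unfold Gf Cf
  set X : ℝ := 2*(n:ℝ) with hXdef
  have hX := Xfour n hn
  have hX0 : (0:ℝ) < X := by linarith
  have hx1 : (0:ℝ) < X - 1 := by linarith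
  have hd2 : (0:ℝ) < (X-1)^2 := by positivity
  have hnum : X^(n+1-q) - X^(n+1-p) < X^n := by
    have h1 : X^(n+1-q) ≤ X^n := pow_le_pow_right₀ (by linarith) (by omega)
    have h2 : (0:ℝ) < X^(n+1-p) := pow_pos hX0 _
    linarith
  have step1 : (X^(n+1-q) - X^(n+1-p))/(X-1)^2 < X^n/(X-1)^2 :=
    (div_lt_div_iff_of_pos_right hd2).mpr hnum
  have step2 : X^n/(X-1)^2 < X^(n+1)/(X-1)/2 := by
    rw [div_div, div_lt_div_iff₀ hd2 (by positivity)]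
    have e : X^(n+1) = X^n * X := pow_succ X n
    have hP : (0:ℝ) < X^n := pow_pos hX0 n
    nlinarith [mul_pos hP (show (0:ℝ) < (X-1)*(X*(X-1)-2) by nlinarith)]
  linarith

lemma Gratio (n q p q' p' : ℕ) (hn : 2 ≤ n) (hqp : q < p) (hpn : p ≤ n)
    (hqq' : q < q') (hq'p' : q' < p') (hp'n : p' ≤ n) :
    2 * Gf n q' p' < Gf n q p := by
  unfold Gf
  set X : ℝ := 2*(n:ℝ) with hXdef
  have hX := Xfour n hn
  have hX0 : (0:ℝ) < X := by linarith
  have hx1 : (0:ℝ) < X - 1 := by linarith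
  have hd2 : (0:ℝ) < (X-1)^2 := by positivity
  have hA : (0:ℝ) < X^(n-q) := pow_pos hX0 _
  have h1 : X^(n-q) * (X-1) ≤ X^(n+1-q) - X^(n+1-p) := by
    have e : X^(n+1-q) = X^(n-q) * X := by rw [show n+1-q = (n-q)+1 by omega, pow_succ]
    have hle : X^(n+1-p) ≤ X^(n-q) := pow_le_pow_right₀ (by linarith) (by omega)
    nlinarith
  have h2 : X^(n+1-q') - X^(n+1-p') < X^(n-q) := by
    have hle : X^(n+1-q') ≤ X^(n-q) := pow_le_pow_right₀ (by linarith) (by omega)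
    have hp0 : (0:ℝ) < X^(n+1-p') := pow_pos hX0 _
    linarith
  have key : 2 * (X^(n+1-q') - X^(n+1-p')) < X^(n+1-q) - X^(n+1-p) := by
    nlinarith
  calc 2 * ((X^(n+1-q') - X^(n+1-p'))/(X-1)^2)
      = (2 * (X^(n+1-q') - X^(n+1-p')))/(X-1)^2 := by ring
    _ < (X^(n+1-q) - X^(n+1-p))/(X-1)^2 := (div_lt_div_iff_of_pos_right hd2).mpr key

lemma geo (n : ℕ) (hn : 1 ≤ n) : ∀ m, m < n →
    ∑ t ∈ Finset.range (m+1), (2*(n:ℝ))^(n-t)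
      = ((2*(n:ℝ))^(n+1) - (2*(n:ℝ))^(n-m))/((2*(n:ℝ))-1) := by
  have hX : (2:ℝ) ≤ 2*(n:ℝ) := by
    have : (1:ℝ) ≤ (n:ℝ) := by exact_mod_cast hn
    linarith
  have hX1 : (2*(n:ℝ)) - 1 ≠ 0 := by linarith
  intro m
  induction m with
  | zero =>
    intro _
    rw [Finset.sum_range_one, pow_succ]
    field_simp
    simp only [Nat.sub_zero]
    ring
  | succ m ih =>
    intro hm
    rw [Finset.sum_range_succ, ih (by omega)]
    rw [show n - m = (n - (m+1)) + 1 by omega, pow_succ]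
    field_simp
    ring

lemma astep (n : ℕ) (hn : 1 ≤ n) (a : ℕ → ℝ)
    (ha : ∀ j, a j = ∑ t ∈ Finset.range j, ((j - t : ℕ) : ℝ) * (2 * (n : ℝ)) ^ (n - t)) :
    ∀ m, m < n → a (m+1) - a m
      = ((2*(n:ℝ))^(n+1) - (2*(n:ℝ))^(n-m))/((2*(n:ℝ))-1) := by
  intro m hm
  have hgeo := geo n hn m hm
  rw [Finset.sum_range_succ] at hgeo
  rw [ha (m+1), ha m, Finset.sum_range_succ]
  have h1 : ∑ t ∈ Finset.range m, ((m + 1 - t : ℕ) : ℝ) * (2 * (n:ℝ)) ^ (n - t)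
      - ∑ t ∈ Finset.range m, ((m - t : ℕ) : ℝ) * (2 * (n:ℝ)) ^ (n - t)
      = ∑ t ∈ Finset.range m, (2 * (n:ℝ)) ^ (n - t) := by
    rw [← Finset.sum_sub_distrib]
    apply Finset.sum_congr rfl
    intro t ht
    have htm : t < m := Finset.mem_range.mp ht
    rw [show m + 1 - t = (m - t) + 1 by omega]
    push_cast
    ring
  rw [show m + 1 - m = 1 by omega]
  push_cast
  linarith

lemma adiff (n : ℕ) (hn : 1 ≤ n) (a : ℕ → ℝ)
    (ha : ∀ j, a j = ∑ t ∈ Finset.range j, ((j - t : ℕ) : ℝ) * (2 * (n : ℝ)) ^ (n - t)) :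
    ∀ q p, q ≤ p → p ≤ n → a p - a q
      = ((p:ℝ) - (q:ℝ)) * ((2*(n:ℝ))^(n+1)/((2*(n:ℝ))-1))
        - ((2*(n:ℝ))^(n+1-q) - (2*(n:ℝ))^(n+1-p))/((2*(n:ℝ))-1)^2 := by
  have hX : (2:ℝ) ≤ 2*(n:ℝ) := by
    have : (1:ℝ) ≤ (n:ℝ) := by exact_mod_cast hn
    linarith
  have hX1 : (2*(n:ℝ)) - 1 ≠ 0 := by linarith
  intro q p hqp hpn
  induction p, hqp using Nat.le_induction with
  | base => simp
  | succ p hqp ih =>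
    have hpn' : p ≤ n := by omega
    have h1 := astep n hn a ha p (by omega)
    have h2 := ih hpn'
    have e1 : n + 1 - p = (n - p) + 1 := by omega
    have e2 : n + 1 - (p + 1) = n - p := by omega
    rw [e2]
    rw [e1] at h2
    push_cast
    rw [pow_succ] at h2
    have goal : a (p+1) - a q = (a (p+1) - a p) + (a p - a q) := by ring
    rw [goal, h1, h2]
    field_simp
    ring

lemma arep (n : ℕ) (hn : 2 ≤ n) (a : ℕ → ℝ)
    (ha : ∀ j, a j = ∑ t ∈ Finset.range j, ((j - t : ℕ) : ℝ) * (2 * (n : ℝ)) ^ (n - t))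
    (q k : ℕ) (hq : 1 ≤ q) (hk : 1 ≤ k) (hqk : q + k ≤ n) :
    a (q+k) - a q = (k:ℝ) * Cf n - Gf n q (q+k) := by
  have := adiff n (by omega) a ha q (q+k) (by omega) hqk
  unfold Cf Gf
  rw [this]
  push_cast
  ring

end Stmt13Aux

set_option maxHeartbeats 2000000 in
/-- with `a_j = Σ_{t=0}^{j-1} (j-t)(2n)^{n-t}` and `A = {a_1, ..., a_n}`,
if `M ⊆ A × A` is a matching and `S = {a - b : (a,b) ∈ M}` is convex, then the index set
`K(S) = {k : some a_{j+k} - a_j lies in S}` contains no four consecutive elements in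
arithmetic progression. -/
theorem statement13 (n : ℕ) (hn : 1 ≤ n) (a : ℕ → ℝ)
    (ha : ∀ j, a j = ∑ t ∈ Finset.range j, ((j - t : ℕ) : ℝ) * (2 * (n : ℝ)) ^ (n - t))
    (A : Finset ℝ) (hA : A = (Finset.Icc 1 n).image a)
    (M : Finset (ℝ × ℝ)) (hM : IsMatching A M)
    (S : Finset ℝ) (hSdef : S = M.image (fun p => p.1 - p.2))
    (hSconv : ConvexFinset S)
    (K : Finset ℕ)
    (hK : K = (Finset.Icc 1 (n - 1)).filter
      (fun k => ∃ j, 1 ≤ j ∧ j + k ≤ n ∧ a (j + k) - a j ∈ S)) :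
    ¬ ∃ k₁ k₂ k₃ k₄ : ℕ, k₁ ∈ K ∧ k₂ ∈ K ∧ k₃ ∈ K ∧ k₄ ∈ K ∧
      k₁ < k₂ ∧ k₂ < k₃ ∧ k₃ < k₄ ∧
      (∀ x ∈ K, ¬(k₁ < x ∧ x < k₂)) ∧
      (∀ x ∈ K, ¬(k₂ < x ∧ x < k₃)) ∧
      (∀ x ∈ K, ¬(k₃ < x ∧ x < k₄)) ∧
      k₁ + k₃ = 2 * k₂ ∧ k₂ + k₄ = 2 * k₃ := by
  classical
  rintro ⟨k₁, k₂, k₃, k₄, hk1K, hk2K, hk3K, hk4K, h12, h23, h34, hb12, hb23, hb34, hAP1, hAP2⟩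
  have hKmem : ∀ k, k ∈ K ↔ (1 ≤ k ∧ k ≤ n - 1 ∧ ∃ j, 1 ≤ j ∧ j + k ≤ n ∧ a (j + k) - a j ∈ S) := by
    intro k
    rw [hK, Finset.mem_filter, Finset.mem_Icc]
    tauto
  rcases Nat.lt_or_ge n 2 with hn1 | hn2
  · obtain ⟨hk1a, hk1b, -⟩ := (hKmem k₁).mp hk1K
    omega
  -- notation
  have hCpos := Stmt13Aux.Cpos n hn2
  -- bounds on differences
  have hdb : ∀ q k, 1 ≤ q → 1 ≤ k → q + k ≤ n →
      (k:ℝ) * Stmt13Aux.Cf n - Stmt13Aux.Cf n / 2 < a (q+k) - a q ∧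
      a (q+k) - a q < (k:ℝ) * Stmt13Aux.Cf n := by
    intro q k hq hk hqk
    rw [Stmt13Aux.arep n hn2 a ha q k hq hk hqk]
    have h1 := Stmt13Aux.Gpos n q (q+k) hn2 (by omega) hqk
    have h2 := Stmt13Aux.Ghalf n q (q+k) hn2 hq (by omega) hqk
    constructor <;> linarith
  -- blocks
  set B : ℕ → Finset ℝ := fun k =>
    S.filter (fun t => (k:ℝ) * Stmt13Aux.Cf n - Stmt13Aux.Cf n / 2 < t ∧ t < (k:ℝ) * Stmt13Aux.Cf n)
    with hBdef
  have hBmem : ∀ k t, t ∈ B k ↔ (t ∈ S ∧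
      ((k:ℝ) * Stmt13Aux.Cf n - Stmt13Aux.Cf n / 2 < t ∧ t < (k:ℝ) * Stmt13Aux.Cf n)) := by
    intro k t
    rw [hBdef]
    exact Finset.mem_filter
  have hBne : ∀ k, k ∈ K → (B k).Nonempty := by
    intro k hk
    obtain ⟨hk1, hk2, j, hj1, hjk, hjS⟩ := (hKmem k).mp hk
    exact ⟨a (j+k) - a j, (hBmem k _).mpr ⟨hjS, (hdb j k hj1 hk1 hjk).1, (hdb j k hj1 hk1 hjk).2⟩⟩
  have hBpos : ∀ k t, 1 ≤ k → t ∈ B k → 0 < t := by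
    intro k t hk ht
    have h := ((hBmem k t).mp ht).2.1
    have hk' : (1:ℝ) ≤ (k:ℝ) := by exact_mod_cast hk
    nlinarith
  -- classification of positive elements of S
  have hclass : ∀ t ∈ S, (0:ℝ) < t → ∃ P ∈ M, ∃ j k, 1 ≤ j ∧ 1 ≤ k ∧ j + k ≤ n ∧
      P.1 = a (j+k) ∧ P.2 = a j ∧ t = a (j+k) - a j ∧ k ∈ K ∧ t ∈ B k := by
    intro t htS htpos
    rw [hSdef] at htS
    obtain ⟨P, hPM, hPeq⟩ := Finset.mem_image.mp htS
    obtain ⟨h1A, h2A, hPne⟩ := hM.1 P hPM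
    rw [hA] at h1A h2A
    obtain ⟨α, hα, hα2⟩ := Finset.mem_image.mp h1A
    obtain ⟨β, hβ, hβ2⟩ := Finset.mem_image.mp h2A
    have hαI := Finset.mem_Icc.mp hα
    have hβI := Finset.mem_Icc.mp hβ
    have ht2 : t = a α - a β := by rw [hα2, hβ2]; exact hPeq.symm
    rcases lt_trichotomy α β with hc | hc | hc
    · -- then a β - a α > 0, so t < 0
      have hpos := (hdb α (β - α) hαI.1 (by omega) (by omega)).1
      rw [show α + (β - α) = β by omega] at hpos
      have hk' : (1:ℝ) ≤ ((β - α : ℕ):ℝ) := by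
        have : 1 ≤ β - α := by omega
        exact_mod_cast this
      nlinarith
    · exact absurd (show P.1 = P.2 by rw [← hα2, ← hβ2, hc]) hPne
    · refine ⟨P, hPM, β, α - β, hβI.1, by omega, by omega, ?_, hβ2.symm, ?_, ?_, ?_⟩
      · rw [show β + (α - β) = α by omega]; exact hα2.symm
      · rw [show β + (α - β) = α by omega]; exact ht2
      · refine (hKmem (α - β)).mpr ⟨by omega, by omega, β, hβI.1, by omega, ?_⟩
        rw [show β + (α - β) = α by omega, ← ht2]
        rw [hSdef]; exact htS
      · refine (hBmem (α - β) t).mpr ⟨by rw [hSdef]; exact htS, ?_, ?_⟩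
        · have := (hdb β (α - β) hβI.1 (by omega) (by omega)).1
          rw [show β + (α - β) = α by omega] at this
          rw [ht2]; exact this
        · have := (hdb β (α - β) hβI.1 (by omega) (by omega)).2
          rw [show β + (α - β) = α by omega] at this
          rw [ht2]; exact this
  -- block index is unique
  have huniq : ∀ (kk kk' : ℕ) (t : ℝ),
      ((kk:ℝ) * Stmt13Aux.Cf n - Stmt13Aux.Cf n / 2 < t ∧ t < (kk:ℝ) * Stmt13Aux.Cf n) →
      ((kk':ℝ) * Stmt13Aux.Cf n - Stmt13Aux.Cf n / 2 < t ∧ t < (kk':ℝ) * Stmt13Aux.Cf n) →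
      kk = kk' := by
    intro kk kk' t ⟨h1, h2⟩ ⟨h3, h4⟩
    have l1 : (kk:ℝ) < (kk':ℝ) + 1 := by nlinarith
    have l2 : (kk':ℝ) < (kk:ℝ) + 1 := by nlinarith
    have l1' : kk < kk' + 1 := by exact_mod_cast l1
    have l2' : kk' < kk + 1 := by exact_mod_cast l2
    omega
  -- adjacency: consecutive blocks are consecutive in S
  have hadj : ∀ kl kr (hkl : kl ∈ K) (hkr : kr ∈ K), kl < kr →
      (∀ x ∈ K, ¬(kl < x ∧ x < kr)) →
      (B kl).max' (hBne kl hkl) < (B kr).min' (hBne kr hkr) ∧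
      (∀ t ∈ S, t ≤ (B kl).max' (hBne kl hkl) ∨ (B kr).min' (hBne kr hkr) ≤ t) := by
    intro kl kr hkl hkr hlt hbtw
    obtain ⟨hkl1, hkln, -⟩ := (hKmem kl).mp hkl
    obtain ⟨hkr1, hkrn, -⟩ := (hKmem kr).mp hkr
    have hMl := (hBmem kl _).mp ((B kl).max'_mem (hBne kl hkl))
    have hmr := (hBmem kr _).mp ((B kr).min'_mem (hBne kr hkr))
    have hsep : (kl:ℝ) * Stmt13Aux.Cf n + Stmt13Aux.Cf n ≤ (kr:ℝ) * Stmt13Aux.Cf n := by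
      have : (kl:ℝ) + 1 ≤ (kr:ℝ) := by exact_mod_cast hlt
      nlinarith
    constructor
    · linarith [hMl.2.2, hmr.2.1]
    · intro t htS
      rcases le_or_gt t ((B kl).max' (hBne kl hkl)) with h | h
      · left; exact h
      · right
        by_contra hcon
        push_neg at hcon
        have htpos : 0 < t := lt_trans (hBpos kl _ hkl1 ((B kl).max'_mem (hBne kl hkl))) h
        obtain ⟨P, hPM, j, k', hj1, hk'1, hjk', hP1, hP2, htre, hk'K, htB⟩ := hclass t htS htpos
        have htb := ((hBmem k' t).mp htB).2
        have hklk' : kl ≤ k' := by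
          have h5 : (kl:ℝ) * Stmt13Aux.Cf n - Stmt13Aux.Cf n / 2 < (k':ℝ) * Stmt13Aux.Cf n :=
            lt_trans (lt_trans hMl.2.1 h) htb.2
          have l1 : (kl:ℝ) < (k':ℝ) + 1 := by nlinarith
          have l1' : kl < k' + 1 := by exact_mod_cast l1
          omega
        have hk'kr : k' ≤ kr := by
          have h5 : (k':ℝ) * Stmt13Aux.Cf n - Stmt13Aux.Cf n / 2 < (kr:ℝ) * Stmt13Aux.Cf n :=
            lt_trans htb.1 (lt_trans hcon hmr.2.2)
          have l1 : (k':ℝ) < (kr:ℝ) + 1 := by nlinarith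
          have l1' : k' < kr + 1 := by exact_mod_cast l1
          omega
        rcases Nat.eq_or_lt_of_le hklk' with he | hlt2
        · exact absurd (Finset.le_max' (B kl) t (by rw [he]; exact htB)) (not_le.mpr h)
        · rcases Nat.eq_or_lt_of_le hk'kr with he2 | hlt3
          · exact absurd (Finset.min'_le (B kr) t (by rw [← he2]; exact htB)) (not_le.mpr hcon)
          · exact hbtw k' hk'K ⟨hlt2, hlt3⟩
  -- singleton blocks
  have hsing : ∀ kl kr (hkl : kl ∈ K) (hkr : kr ∈ K), kl < kr →
      (∀ x ∈ K, ¬(kl < x ∧ x < kr)) →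
      ∀ t ∈ B kr, t = (B kr).min' (hBne kr hkr) := by
    intro kl kr hkl hkr hlt hbtw t htB
    by_contra hne
    obtain ⟨hkl1, hkln, -⟩ := (hKmem kl).mp hkl
    obtain ⟨hkr1, hkrn, -⟩ := (hKmem kr).mp hkr
    have hmrt : (B kr).min' (hBne kr hkr) < t :=
      lt_of_le_of_ne (Finset.min'_le _ t htB) (Ne.symm hne)
    set T := S.filter (fun y => (B kr).min' (hBne kr hkr) < y) with hTdef
    have htT : t ∈ T := by
      rw [hTdef]
      exact Finset.mem_filter.mpr ⟨((hBmem kr t).mp htB).1, hmrt⟩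
    have hTne : T.Nonempty := ⟨t, htT⟩
    have hyT := Finset.mem_filter.mp (T.min'_mem hTne)
    have hyt : T.min' hTne ≤ t := T.min'_le t htT
    have hconsec2 : ∀ z ∈ S, z ≤ (B kr).min' (hBne kr hkr) ∨ T.min' hTne ≤ z := by
      intro z hz
      rcases le_or_gt z ((B kr).min' (hBne kr hkr)) with h | h
      · left; exact h
      · right; exact T.min'_le z (Finset.mem_filter.mpr ⟨hz, h⟩)
    obtain ⟨hMlmr, hcons1⟩ := hadj kl kr hkl hkr hlt hbtw
    have hMlS : (B kl).max' (hBne kl hkl) ∈ S :=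
      ((hBmem kl _).mp ((B kl).max'_mem (hBne kl hkl))).1
    have hmrS : (B kr).min' (hBne kr hkr) ∈ S :=
      ((hBmem kr _).mp ((B kr).min'_mem (hBne kr hkr))).1
    have hck := Stmt13Aux.conv_key S hSconv
      ((B kl).max' (hBne kl hkl)) ((B kr).min' (hBne kr hkr))
      ((B kr).min' (hBne kr hkr)) (T.min' hTne)
      hMlS hmrS hmrS hyT.1 hMlmr hyT.2 le_rfl hcons1 hconsec2
    -- bounds
    have hMl := (hBmem kl _).mp ((B kl).max'_mem (hBne kl hkl))
    have hmr := (hBmem kr _).mp ((B kr).min'_mem (hBne kr hkr))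
    have htb := ((hBmem kr t).mp htB).2
    have hsep : (kl:ℝ) * Stmt13Aux.Cf n + Stmt13Aux.Cf n ≤ (kr:ℝ) * Stmt13Aux.Cf n := by
      have : (kl:ℝ) + 1 ≤ (kr:ℝ) := by exact_mod_cast hlt
      nlinarith
    -- min' T ≤ t < kr*C  and  mr > kr*C - C/2 : gap < C/2
    -- mr - Ml > kr*C - C/2 - kl*C ≥ C/2
    linarith [hMl.2.2, hmr.2.1, htb.2]
  -- apply singletons to blocks 2 and 3
  have hs2 := hsing k₁ k₂ hk1K hk2K h12 hb12
  have hs3 := hsing k₂ k₃ hk2K hk3K h23 hb23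
  set x₁ := (B k₁).max' (hBne k₁ hk1K) with hx₁def
  set x₂ := (B k₂).min' (hBne k₂ hk2K) with hx₂def
  set x₃ := (B k₃).min' (hBne k₃ hk3K) with hx₃def
  set x₄ := (B k₄).min' (hBne k₄ hk4K) with hx₄def
  have hmax2 : (B k₂).max' (hBne k₂ hk2K) = x₂ := hs2 _ ((B k₂).max'_mem (hBne k₂ hk2K))
  have hmax3 : (B k₃).max' (hBne k₃ hk3K) = x₃ := hs3 _ ((B k₃).max'_mem (hBne k₃ hk3K))
  obtain ⟨h12lt, h12cons⟩ := hadj k₁ k₂ hk1K hk2K h12 hb12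
  obtain ⟨h23lt, h23cons⟩ := hadj k₂ k₃ hk2K hk3K h23 hb23
  obtain ⟨h34lt, h34cons⟩ := hadj k₃ k₄ hk3K hk4K h34 hb34
  rw [hmax2] at h23lt h23cons
  rw [hmax3] at h34lt h34cons
  have hx1B : x₁ ∈ B k₁ := (B k₁).max'_mem (hBne k₁ hk1K)
  have hx2B : x₂ ∈ B k₂ := (B k₂).min'_mem (hBne k₂ hk2K)
  have hx3B : x₃ ∈ B k₃ := (B k₃).min'_mem (hBne k₃ hk3K)
  have hx4B : x₄ ∈ B k₄ := (B k₄).min'_mem (hBne k₄ hk4K)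
  have hx1S : x₁ ∈ S := ((hBmem k₁ x₁).mp hx1B).1
  have hx2S : x₂ ∈ S := ((hBmem k₂ x₂).mp hx2B).1
  have hx3S : x₃ ∈ S := ((hBmem k₃ x₃).mp hx3B).1
  have hx4S : x₄ ∈ S := ((hBmem k₄ x₄).mp hx4B).1
  have hineq1 : x₂ - x₁ < x₃ - x₂ :=
    Stmt13Aux.conv_key S hSconv x₁ x₂ x₂ x₃ hx1S hx2S hx2S hx3S h12lt h23lt le_rfl h12cons h23cons
  have hineq2 : x₃ - x₂ < x₄ - x₃ :=
    Stmt13Aux.conv_key S hSconv x₂ x₃ x₃ x₄ hx2S hx3S hx3S hx4S h23lt h34lt le_rfl h23cons h34cons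
  -- representations
  have hK1 : 1 ≤ k₁ := ((hKmem k₁).mp hk1K).1
  have hK2 : 1 ≤ k₂ := ((hKmem k₂).mp hk2K).1
  have hK3 : 1 ≤ k₃ := ((hKmem k₃).mp hk3K).1
  have hK4 : 1 ≤ k₄ := ((hKmem k₄).mp hk4K).1
  obtain ⟨P₁, hP₁M, j₁, κ₁, hj₁, hκ₁, hjκ₁, hP₁1, hP₁2, hx₁e, hκ₁K, hx₁B'⟩ :=
    hclass x₁ hx1S (hBpos k₁ x₁ hK1 hx1B)
  obtain ⟨P₂, hP₂M, j₂, κ₂, hj₂, hκ₂, hjκ₂, hP₂1, hP₂2, hx₂e, hκ₂K, hx₂B'⟩ :=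
    hclass x₂ hx2S (hBpos k₂ x₂ hK2 hx2B)
  obtain ⟨P₃, hP₃M, j₃, κ₃, hj₃, hκ₃, hjκ₃, hP₃1, hP₃2, hx₃e, hκ₃K, hx₃B'⟩ :=
    hclass x₃ hx3S (hBpos k₃ x₃ hK3 hx3B)
  obtain ⟨P₄, hP₄M, j₄, κ₄, hj₄, hκ₄, hjκ₄, hP₄1, hP₄2, hx₄e, hκ₄K, hx₄B'⟩ :=
    hclass x₄ hx4S (hBpos k₄ x₄ hK4 hx4B)
  have hκ₁k : κ₁ = k₁ :=
    huniq κ₁ k₁ x₁ ((hBmem κ₁ x₁).mp hx₁B').2 ((hBmem k₁ x₁).mp hx1B).2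
  have hκ₂k : κ₂ = k₂ :=
    huniq κ₂ k₂ x₂ ((hBmem κ₂ x₂).mp hx₂B').2 ((hBmem k₂ x₂).mp hx2B).2
  have hκ₃k : κ₃ = k₃ :=
    huniq κ₃ k₃ x₃ ((hBmem κ₃ x₃).mp hx₃B').2 ((hBmem k₃ x₃).mp hx3B).2
  have hκ₄k : κ₄ = k₄ :=
    huniq κ₄ k₄ x₄ ((hBmem κ₄ x₄).mp hx₄B').2 ((hBmem k₄ x₄).mp hx4B).2
  rw [hκ₁k] at hκ₁ hjκ₁ hP₁1 hx₁e
  rw [hκ₂k] at hκ₂ hjκ₂ hP₂1 hx₂e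
  rw [hκ₃k] at hκ₃ hjκ₃ hP₃1 hx₃e
  rw [hκ₄k] at hκ₄ hjκ₄ hP₄1 hx₄e
  -- closed forms
  have hf1 : x₁ = (k₁:ℝ) * Stmt13Aux.Cf n - Stmt13Aux.Gf n j₁ (j₁ + k₁) := by
    rw [hx₁e]; exact Stmt13Aux.arep n hn2 a ha j₁ k₁ hj₁ hκ₁ hjκ₁
  have hf2 : x₂ = (k₂:ℝ) * Stmt13Aux.Cf n - Stmt13Aux.Gf n j₂ (j₂ + k₂) := by
    rw [hx₂e]; exact Stmt13Aux.arep n hn2 a ha j₂ k₂ hj₂ hκ₂ hjκ₂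
  have hf3 : x₃ = (k₃:ℝ) * Stmt13Aux.Cf n - Stmt13Aux.Gf n j₃ (j₃ + k₃) := by
    rw [hx₃e]; exact Stmt13Aux.arep n hn2 a ha j₃ k₃ hj₃ hκ₃ hjκ₃
  have hf4 : x₄ = (k₄:ℝ) * Stmt13Aux.Cf n - Stmt13Aux.Gf n j₄ (j₄ + k₄) := by
    rw [hx₄e]; exact Stmt13Aux.arep n hn2 a ha j₄ k₄ hj₄ hκ₄ hjκ₄
  -- AP conditions over ℝ
  have hap1 : ((k₁:ℝ) + (k₃:ℝ)) * Stmt13Aux.Cf n = (2*(k₂:ℝ)) * Stmt13Aux.Cf n := by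
    have : (k₁:ℝ) + (k₃:ℝ) = 2*(k₂:ℝ) := by exact_mod_cast hAP1
    rw [this]
  have hap2 : ((k₂:ℝ) + (k₄:ℝ)) * Stmt13Aux.Cf n = (2*(k₃:ℝ)) * Stmt13Aux.Cf n := by
    have : (k₂:ℝ) + (k₄:ℝ) = 2*(k₃:ℝ) := by exact_mod_cast hAP2
    rw [this]
  have hG1pos := Stmt13Aux.Gpos n j₁ (j₁ + k₁) hn2 (by omega) hjκ₁
  have hG4pos := Stmt13Aux.Gpos n j₄ (j₄ + k₄) hn2 (by omega) hjκ₄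
  have hg1 : Stmt13Aux.Gf n j₁ (j₁ + k₁) + Stmt13Aux.Gf n j₃ (j₃ + k₃)
      < 2 * Stmt13Aux.Gf n j₂ (j₂ + k₂) := by
    rw [hf1, hf2, hf3] at hineq1
    nlinarith [hap1]
  have hg2 : Stmt13Aux.Gf n j₂ (j₂ + k₂) + Stmt13Aux.Gf n j₄ (j₄ + k₄)
      < 2 * Stmt13Aux.Gf n j₃ (j₃ + k₃) := by
    rw [hf2, hf3, hf4] at hineq2
    nlinarith [hap2]
  -- j₂ ≠ j₃ from matching
  have hjne : j₂ ≠ j₃ := by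
    intro he
    have hx23 : x₂ ≠ x₃ := ne_of_lt h23lt
    have hPne : P₂ ≠ P₃ := by
      intro hPe
      apply hx23
      rw [hx₂e, hx₃e, ← hP₂1, ← hP₂2, ← hP₃1, ← hP₃2, hPe]
    have h4 := (hM.2 P₂ hP₂M P₃ hP₃M hPne).2.2.2
    apply h4
    rw [hP₂2, hP₃2, he]
  rcases Nat.lt_or_ge j₂ j₃ with hlt' | hge'
  · have := Stmt13Aux.Gratio n j₂ (j₂+k₂) j₃ (j₃+k₃) hn2 (by omega) hjκ₂ hlt' (by omega) hjκ₃
    linarith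
  · have hgt : j₃ < j₂ := by omega
    have := Stmt13Aux.Gratio n j₃ (j₃+k₃) j₂ (j₂+k₂) hn2 (by omega) hjκ₃ hgt (by omega) hjκ₂
    linarith
end

section
/- Let n ∈ ℕ be even and let A = {a_1 < ... < a_n} be a convex set of reals. Define M = {(a_k, a_{n/2+k}) : 1 ≤ k ≤ n/2}. Then M is a matching of size n/2 and the set {a_{n/2+k} + a_k : 1 ≤ k ≤ n/2} is convex. -/
section ShiftedPairs

variable {n m : ℕ} {a : ℕ → ℝ}

lemma strictMonoOn_Icc_of_lt_add_one_s15 (ha : ∀ i, 1 ≤ i → i + 1 ≤ n → a i < a (i + 1)) :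
    StrictMonoOn a (Set.Icc 1 n) :=
  strictMonoOn_of_lt_succ Set.ordConnected_Icc fun i _ hi hi' => by
    rw [Order.succ_eq_add_one] at hi' ⊢
    exact ha i hi.1 hi'.2

lemma card_image_shiftedPairs (ha : Set.InjOn a (Set.Icc 1 n)) (hm : 2 * m ≤ n) :
    ((Finset.Icc 1 m).image fun k => (a k, a (m + k))).card = m := by
  rw [Finset.card_image_of_injOn, Nat.card_Icc, Nat.add_sub_cancel]
  intro i hi j hj hij
  simp only [Finset.coe_Icc, Set.mem_Icc] at hi hj
  exact ha ⟨hi.1, by omega⟩ ⟨hj.1, by omega⟩ (congrArg Prod.fst hij)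

lemma isMatching_image_shiftedPairs (ha : Set.InjOn a (Set.Icc 1 n)) (hm : 2 * m ≤ n) :
    IsMatching ((Finset.Icc 1 n).image a)
      ((Finset.Icc 1 m).image fun k => (a k, a (m + k))) := by
  have hne : ∀ i j, 1 ≤ i → i ≤ n → 1 ≤ j → j ≤ n → i ≠ j → a i ≠ a j :=
    fun i j hi hi' hj hj' => (ha.ne_iff ⟨hi, hi'⟩ ⟨hj, hj'⟩).2
  simp only [IsMatching, Finset.mem_image, Finset.mem_Icc]
  constructor
  · rintro _ ⟨k, hk, rfl⟩
    exact ⟨⟨k, ⟨hk.1, by omega⟩, rfl⟩, ⟨m + k, ⟨by omega, by omega⟩, rfl⟩,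
      hne _ _ hk.1 (by omega) (by omega) (by omega) (by omega)⟩
  · rintro _ ⟨k, hk, rfl⟩ _ ⟨l, hl, rfl⟩ hkl
    have hkl : k ≠ l := by rintro rfl; exact hkl rfl
    exact ⟨hne _ _ (by omega) (by omega) (by omega) (by omega) hkl,
      hne _ _ (by omega) (by omega) (by omega) (by omega) (by omega),
      hne _ _ (by omega) (by omega) (by omega) (by omega) (by omega),
      hne _ _ (by omega) (by omega) (by omega) (by omega) (by omega)⟩

/-- The second difference of `k ↦ a (m + k) + a k` at `k` is the sum of those of `a` at
`k` and at `m + k`. -/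
lemma shiftedSum_convex (ha : ∀ i, 2 ≤ i → i + 1 ≤ n → a (i + 1) - a i > a i - a (i - 1))
    (hm : 2 * m ≤ n) (k : ℕ) (hk : 2 ≤ k) (hkm : k + 1 ≤ m) :
    (a (m + (k + 1)) + a (k + 1)) - (a (m + k) + a k) >
      (a (m + k) + a k) - (a (m + (k - 1)) + a (k - 1)) := by
  have hlow := ha k hk (by omega)
  have hhigh := ha (m + k) (by omega) (by omega)
  rw [← add_assoc, show m + (k - 1) = m + k - 1 by omega]
  linarith

end ShiftedPairs

theorem statement15_general (n : ℕ) (a : ℕ → ℝ)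
    (ha_mono : ∀ i, 1 ≤ i → i + 1 ≤ n → a i < a (i + 1))
    (ha_conv : ∀ i, 2 ≤ i → i + 1 ≤ n → a (i + 1) - a i > a i - a (i - 1))
    (A : Finset ℝ) (hA : A = (Finset.Icc 1 n).image a)
    (M : Finset (ℝ × ℝ))
    (hM : M = (Finset.Icc 1 (n / 2)).image (fun k => (a k, a (n / 2 + k))))
    (s : ℕ → ℝ) (hs : ∀ k, s k = a (n / 2 + k) + a k) :
    IsMatching A M ∧ M.card = n / 2 ∧
    (∀ k, 2 ≤ k → k + 1 ≤ n / 2 → s (k + 1) - s k > s k - s (k - 1)) := by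
  subst hA hM
  have hinj := (strictMonoOn_Icc_of_lt_add_one_s15 ha_mono).injOn
  have hm : 2 * (n / 2) ≤ n := Nat.mul_div_le n 2
  refine ⟨isMatching_image_shiftedPairs hinj hm, card_image_shiftedPairs hinj hm, ?_⟩
  intro k hk hkm
  simpa only [hs] using shiftedSum_convex ha_conv hm k hk hkm

/-- for even `n` and a convex set `A = {a_1 < ... < a_n}` (given as a
strictly increasing convex sequence on indices `1, ..., n`), the set
`M = {(a_k, a_{n/2+k}) : 1 ≤ k ≤ n/2}` is a matching of size `n/2` and the sums
`s_k = a_{n/2+k} + a_k` form a convex set. -/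
theorem statement15 (n : ℕ) (hn : Even n) (hn0 : 0 < n) (a : ℕ → ℝ)
    (ha_mono : ∀ i, 1 ≤ i → i + 1 ≤ n → a i < a (i + 1))
    (ha_conv : ∀ i, 2 ≤ i → i + 1 ≤ n → a (i + 1) - a i > a i - a (i - 1))
    (A : Finset ℝ) (hA : A = (Finset.Icc 1 n).image a)
    (M : Finset (ℝ × ℝ))
    (hM : M = (Finset.Icc 1 (n / 2)).image (fun k => (a k, a (n / 2 + k))))
    (s : ℕ → ℝ) (hs : ∀ k, s k = a (n / 2 + k) + a k) :
    IsMatching A M ∧ M.card = n / 2 ∧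
    (∀ k, 2 ≤ k → k + 1 ≤ n / 2 → s (k + 1) - s k > s k - s (k - 1)) :=
  statement15_general n a ha_mono ha_conv A hA M hM s hs
end
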